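/- arXiv:2410.03687 — 9 statements merged into one kernel-verified Lean document; each statement's English description precedes it below -/
import Mathlib

section
/- Let X be a Banach space and f : X → ℝ ∪ {+∞} a proper lower semicontinuous convex function whose lower level set S_f := {x : f(x) ≤ 0} is nonempty. Then the global error bound modulus Er(f) := inf_{f(x)>0} f(x)/d(x, S_f) satisfies Er(f) = inf_{f(x)>0} ( − inf_{‖h‖=1} d⁺f(x, h) ). -/
open Filter Topology Metric Set

variable {X : Type*} [NormedAddCommGroup X] [NormedSpace ℝ X]

/-- difference quotient (f(x+th)-f(x))/t, with values in EReal -/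
noncomputable def dquot (f : X → EReal) (x h : X) (t : ℝ) : EReal :=
  ((t⁻¹ : ℝ) : EReal) * (f (x + t • h) - f x)

/-- directional derivative d⁺f(x,h) = inf_{t>0} (f(x+th)-f(x))/t -/
noncomputable def dirDeriv (f : X → EReal) (x h : X) : EReal :=
  ⨅ t : {t : ℝ // 0 < t}, dquot f x h t

/-- convexity for extended-real-valued functions -/
def EConvexOn (f : X → EReal) : Prop :=
  ∀ x y : X, ∀ a b : ℝ, 0 ≤ a → 0 ≤ b → a + b = 1 →
    f (a • x + b • y) ≤ (a : EReal) * f x + (b : EReal) * f y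

/-- properness: somewhere finite and nowhere -∞ -/
def EProper (f : X → EReal) : Prop := (∃ x, f x ≠ ⊤) ∧ ∀ x, f x ≠ ⊥

/-- inf of directional derivatives over the unit sphere -/
noncomputable def sphInf (f : X → EReal) (x : X) : EReal :=
  ⨅ h : {h : X // ‖h‖ = 1}, dirDeriv f x h

/-- global error bound modulus Er(f) -/
noncomputable def ErG (f : X → EReal) : EReal :=
  ⨅ x : {x : X // 0 < f x}, f x / ((Metric.infDist x.1 {y : X | f y ≤ 0} : ℝ) : EReal)

/-- local error bound modulus Er(f,x₀) -/
noncomputable def ErL (f : X → EReal) (x₀ : X) : EReal :=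
  Filter.liminf (fun x => f x / ((Metric.infDist x {y : X | f y ≤ 0} : ℝ) : EReal))
    (𝓝 x₀ ⊓ Filter.principal {x : X | 0 < f x})

/- ### Auxiliary lemmas -/

private lemma my_lt_toReal {a : EReal} {y : ℝ} (h : (y : EReal) < a) (ha : a ≠ ⊤) :
    y < a.toReal := by
  have hb : a ≠ ⊥ := ne_bot_of_gt h
  rw [← EReal.coe_toReal ha hb] at h
  exact_mod_cast h

private lemma my_toReal_lt {a : EReal} {b : ℝ} (hb : a ≠ ⊥) (h : a < (b : EReal)) :
    a.toReal < b := by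
  have ht : a ≠ ⊤ := ne_top_of_lt h
  rw [← EReal.coe_toReal ht hb] at h
  exact_mod_cast h

private lemma clampE_ne_top (f : X → EReal) (c : ℝ) (x : X) :
    (f x ⊓ (c : EReal)) ⊔ 0 ≠ ⊤ := by
  have h1 : (f x ⊓ (c : EReal)) ⊔ 0 ≤ ((max c 0 : ℝ) : EReal) := by
    apply sup_le
    · exact le_trans inf_le_right (by exact_mod_cast le_max_left c 0)
    · exact_mod_cast le_max_right c 0
  exact ne_top_of_le_ne_top (EReal.coe_ne_top _) h1

private lemma clampE_ne_bot (f : X → EReal) (c : ℝ) (x : X) :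
    (f x ⊓ (c : EReal)) ⊔ 0 ≠ ⊥ := by
  have h1 : (0 : EReal) ≤ (f x ⊓ (c : EReal)) ⊔ 0 := le_sup_right
  have h2 : (⊥ : EReal) < 0 := by
    rw [← EReal.coe_zero]; exact EReal.bot_lt_coe 0
  exact ne_bot_of_gt (lt_of_lt_of_le h2 h1)

private lemma clampR_nonneg (f : X → EReal) (c : ℝ) (x : X) :
    0 ≤ ((f x ⊓ (c : EReal)) ⊔ 0).toReal := by
  rcases lt_or_ge 0 (((f x ⊓ (c : EReal)) ⊔ 0).toReal) with h | h
  · exact h.le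
  · -- show toReal ≥ 0 always: use toReal monotone
    have h1 : (0 : EReal) ≤ (f x ⊓ (c : EReal)) ⊔ 0 := le_sup_right
    have := EReal.toReal_le_toReal h1 (by rw [← EReal.coe_zero]; exact EReal.coe_ne_bot 0)
      (clampE_ne_top f c x)
    simpa using this

private lemma clampR_lsc (f : X → EReal) (c : ℝ) (hc : 0 < c)
    (hlsc : LowerSemicontinuous f) :
    LowerSemicontinuous (fun x => ((f x ⊓ (c : EReal)) ⊔ 0).toReal) := by
  intro x y hy
  rcases lt_or_ge y 0 with h0 | h0
  · exact Filter.Eventually.of_forall fun x' => lt_of_lt_of_le h0 (clampR_nonneg f c x')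
  · have hsup : (y : EReal) < (f x ⊓ (c : EReal)) ⊔ 0 := by
      rw [← EReal.coe_toReal (clampE_ne_top f c x) (clampE_ne_bot f c x)]
      exact_mod_cast hy
    have h1 : (y : EReal) < f x ⊓ (c : EReal) := by
      rcases le_or_gt (f x ⊓ (c : EReal)) ((y : EReal)) with h | h
      · exact absurd hsup (not_lt.2 (sup_le h (by exact_mod_cast h0)))
      · exact h
    have h2 : ∀ᶠ x' in 𝓝 x, (y : EReal) < f x' := hlsc x _ (lt_of_lt_of_le h1 inf_le_left)
    have hyc : (y : EReal) < (c : EReal) := lt_of_lt_of_le h1 inf_le_right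
    filter_upwards [h2] with x' hx'
    have h3 : (y : EReal) < (f x' ⊓ (c : EReal)) ⊔ 0 :=
      lt_of_lt_of_le (lt_inf_iff.2 ⟨hx', hyc⟩) le_sup_left
    exact my_lt_toReal h3 (clampE_ne_top f c x')

private lemma clampR_le_zero_iff (f : X → EReal) (c : ℝ) (hc : 0 < c) (x : X) :
    ((f x ⊓ (c : EReal)) ⊔ 0).toReal ≤ 0 ↔ f x ≤ 0 := by
  constructor
  · intro h
    by_contra hpos
    push_neg at hpos
    have h1 : (0 : EReal) < f x ⊓ (c : EReal) := lt_inf_iff.2 ⟨hpos, by exact_mod_cast hc⟩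
    have h2 : (0 : EReal) < (f x ⊓ (c : EReal)) ⊔ 0 := lt_of_lt_of_le h1 le_sup_left
    have := my_lt_toReal (by exact_mod_cast h2) (clampE_ne_top f c x)
    linarith
  · intro h
    have h1 : (f x ⊓ (c : EReal)) ⊔ 0 = 0 := by
      apply sup_eq_right.2
      exact le_trans inf_le_left h
    rw [h1]
    simp

private lemma clampR_eq (f : X → EReal) (c : ℝ) (x : X)
    (h1 : 0 < ((f x ⊓ (c : EReal)) ⊔ 0).toReal)
    (h2 : ((f x ⊓ (c : EReal)) ⊔ 0).toReal < c) :
    f x = ((((f x ⊓ (c : EReal)) ⊔ 0).toReal : ℝ) : EReal) := by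
  set g := ((f x ⊓ (c : EReal)) ⊔ 0).toReal with hg
  have hcoe : (f x ⊓ (c : EReal)) ⊔ 0 = (g : EReal) :=
    (EReal.coe_toReal (clampE_ne_top f c x) (clampE_ne_bot f c x)).symm
  rcases le_or_gt (f x ⊓ (c : EReal)) 0 with h | h
  · rw [sup_eq_right.2 h] at hcoe
    have : g = 0 := by exact_mod_cast hcoe.symm
    rw [this] at h1; exact absurd h1 (lt_irrefl 0)
  · rw [sup_eq_left.2 h.le] at hcoe
    rcases le_or_gt (f x) ((c : EReal)) with hfc | hfc
    · rw [inf_eq_left.2 hfc] at hcoe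
      exact hcoe
    · rw [inf_eq_right.2 hfc.le] at hcoe
      have : c = g := by exact_mod_cast hcoe
      rw [this] at h2; exact absurd h2 (lt_irrefl g)

private lemma clampR_lt (f : X → EReal) (c : ℝ) (y : X) {b : ℝ} (hb : 0 < b)
    (h : f y < (b : EReal)) : ((f y ⊓ (c : EReal)) ⊔ 0).toReal < b := by
  have h1 : (f y ⊓ (c : EReal)) ⊔ 0 < (b : EReal) := by
    apply sup_lt_iff.2
    exact ⟨lt_of_le_of_lt inf_le_left h, by exact_mod_cast hb⟩
  exact my_toReal_lt (clampE_ne_bot f c y) h1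

private lemma descent {X : Type*} [NormedAddCommGroup X] [NormedSpace ℝ X] [CompleteSpace X]
    (g : X → ℝ) (hg0 : ∀ x, 0 ≤ g x) (hlscg : LowerSemicontinuous g)
    (K : ℝ) (hK : 0 < K) (x₀ : X)
    (H : ∀ x, 0 < g x → g x ≤ g x₀ → ∃ y, g y + K * dist y x < g x) :
    ∃ z, g z ≤ 0 ∧ K * dist z x₀ ≤ g x₀ := by
  classical
  -- refined choice: a near-maximal step
  have key : ∀ x, 0 < g x → g x ≤ g x₀ → ∃ y, g y + K * dist y x < g x ∧
      ∀ y', g y' + K * dist y' x < g x → min (dist y' x) 1 ≤ 2 * min (dist y x) 1 := by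
    intro x hx hx0
    obtain ⟨y₀, hy₀⟩ := H x hx hx0
    set A : Set ℝ := (fun y => min (dist y x) 1) '' {y | g y + K * dist y x < g x} with hA
    have hAne : A.Nonempty := ⟨_, y₀, hy₀, rfl⟩
    have hAbdd : BddAbove A := ⟨1, by rintro r ⟨y, _, rfl⟩; exact min_le_right _ _⟩
    have hy₀x : y₀ ≠ x := by
      rintro rfl
      simp only [dist_self, mul_zero, add_zero] at hy₀
      exact lt_irrefl _ hy₀
    have hpos : 0 < min (dist y₀ x) 1 := lt_min (dist_pos.2 hy₀x) one_pos
    have hlt : sSup A / 2 < sSup A := by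
      have : 0 < sSup A := lt_of_lt_of_le hpos (le_csSup hAbdd ⟨y₀, hy₀, rfl⟩)
      linarith
    obtain ⟨b, hbA, hb⟩ := exists_lt_of_lt_csSup hAne hlt
    obtain ⟨y, hy, rfl⟩ := hbA
    refine ⟨y, hy, fun y' hy' => ?_⟩
    have h1 : min (dist y' x) 1 ≤ sSup A := le_csSup hAbdd ⟨y', hy', rfl⟩
    linarith
  choose! step hstep hmax using key
  let F : X → X := fun p => if 0 < g p ∧ g p ≤ g x₀ then step p else p
  let u : ℕ → X := fun n => F^[n] x₀
  have hu0 : u 0 = x₀ := rfl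
  have husucc : ∀ n, u (n + 1) = F (u n) := fun n => Function.iterate_succ_apply' F n x₀
  have hFstep : ∀ n, (0 < g (u n) ∧ g (u n) ≤ g x₀) → u (n+1) = step (u n) := by
    intro n h; rw [husucc n]; simp only [F, if_pos h]
  have hFconst : ∀ n, ¬(0 < g (u n) ∧ g (u n) ≤ g x₀) → u (n+1) = u n := by
    intro n h; rw [husucc n]; simp only [F, if_neg h]
  have hdec : ∀ n, g (u (n + 1)) + K * dist (u (n + 1)) (u n) ≤ g (u n) := by
    intro n
    by_cases h : 0 < g (u n) ∧ g (u n) ≤ g x₀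
    · rw [hFstep n h]; exact (hstep _ h.1 h.2).le
    · rw [hFconst n h]; simp
  have hmono : ∀ n, g (u (n + 1)) ≤ g (u n) := by
    intro n
    have h1 := hdec n
    have h2 : 0 ≤ K * dist (u (n+1)) (u n) := by positivity
    linarith
  have hantitone : Antitone fun n => g (u n) := antitone_nat_of_succ_le hmono
  have hle : ∀ n, g (u n) ≤ g x₀ := fun n => hantitone (Nat.zero_le n)
  have htel : ∀ n, K * ∑ i ∈ Finset.range n, dist (u i) (u (i + 1)) ≤ g x₀ - g (u n) := by
    intro n
    induction n with
    | zero => simp [hu0]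
    | succ n ih =>
      rw [Finset.sum_range_succ, mul_add]
      have h1 := hdec n
      rw [dist_comm (u (n+1)) (u n)] at h1
      linarith
  have hpsum : ∀ n, ∑ i ∈ Finset.range n, dist (u i) (u (i + 1)) ≤ g x₀ / K := by
    intro n
    rw [le_div_iff₀ hK]
    have h1 := htel n
    have h2 := hg0 (u n)
    linarith [mul_comm K (∑ i ∈ Finset.range n, dist (u i) (u (i + 1)))]
  have hsummable : Summable fun n => dist (u n) (u (n + 1)) :=
    summable_of_sum_range_le (fun _ => dist_nonneg) hpsum
  obtain ⟨z, hz⟩ := cauchySeq_tendsto_of_complete (cauchySeq_of_summable_dist hsummable)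
  have hdistz : dist x₀ z ≤ g x₀ / K := by
    have h1 := dist_le_tsum_dist_of_tendsto₀ hsummable hz
    exact le_trans h1 (Real.tsum_le_of_sum_range_le (fun _ => dist_nonneg) hpsum)
  have hbddb : BddBelow (Set.range fun n => g (u n)) := ⟨0, by rintro r ⟨n, rfl⟩; exact hg0 _⟩
  set L := ⨅ n, g (u n) with hLdef
  have hgtend : Tendsto (fun n => g (u n)) atTop (𝓝 L) := tendsto_atTop_ciInf hantitone hbddb
  have hLle : ∀ n, L ≤ g (u n) := fun n => ciInf_le hbddb n
  have hgz : g z ≤ L := by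
    by_contra hcon
    push_neg at hcon
    obtain ⟨c, hc1, hc2⟩ := exists_between hcon
    have h1 : ∀ᶠ n in atTop, c < g (u n) := hz.eventually (hlscg z c hc2)
    have h2 : ∀ᶠ n in atTop, g (u n) < c := hgtend.eventually_lt_const hc1
    obtain ⟨n, hn1, hn2⟩ := (h1.and h2).exists
    exact absurd (hn1.trans hn2) (lt_irrefl _)
  refine ⟨z, ?_, ?_⟩
  · by_contra hposz
    push_neg at hposz
    have hposn : ∀ n, 0 < g (u n) ∧ g (u n) ≤ g x₀ := by
      intro n
      refine ⟨?_, hle n⟩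
      by_contra hneg
      push_neg at hneg
      have hcond : ¬(0 < g (u n) ∧ g (u n) ≤ g x₀) := by
        rintro ⟨h1, -⟩; exact absurd h1 (not_lt.2 hneg)
      have hconst : ∀ m, u (n + m) = u n := by
        intro m
        induction m with
        | zero => rfl
        | succ m ih =>
          have : ¬(0 < g (u (n + m)) ∧ g (u (n + m)) ≤ g x₀) := by rw [ih]; exact hcond
          rw [show n + (m+1) = (n + m) + 1 from rfl, hFconst _ this, ih]
      have htendconst : Tendsto u atTop (𝓝 (u n)) := by
        refine Tendsto.congr' ?_ tendsto_const_nhds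
        filter_upwards [eventually_ge_atTop n] with m hm
        obtain ⟨k, rfl⟩ := Nat.exists_eq_add_of_le hm
        exact (hconst k).symm
      have hzn : z = u n := tendsto_nhds_unique hz htendconst
      rw [hzn] at hposz
      exact absurd hposz (not_lt.2 hneg)
    have hgzle : g z ≤ g x₀ := le_trans hgz (le_trans (hLle 0) (le_of_eq rfl))
    obtain ⟨y, hy⟩ := H z hposz hgzle
    have hyz : y ≠ z := by
      rintro rfl
      simp only [dist_self, mul_zero, add_zero] at hy
      exact lt_irrefl _ hy
    set δ := dist y z with hδdef
    have hδpos : 0 < δ := dist_pos.2 hyz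
    set m := g z - (g y + K * δ) with hmdef
    have hmpos : 0 < m := by simp only [hmdef]; linarith
    have hsteps0 : Tendsto (fun n => dist (u n) (u (n + 1))) atTop (𝓝 0) :=
      hsummable.tendsto_atTop_zero
    have hε : (0:ℝ) < min (δ / 2) (m / (2 * K)) := lt_min (by linarith) (by positivity)
    have h1 : ∀ᶠ n in atTop, dist (u n) z < min (δ / 2) (m / (2 * K)) := by
      obtain ⟨N, hN⟩ := Metric.tendsto_atTop.1 hz _ hε
      exact eventually_atTop.2 ⟨N, hN⟩
    have h2 : ∀ᶠ n in atTop, dist (u n) (u (n + 1)) < min (δ / 2) 1 / 2 := by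
      apply hsteps0.eventually_lt_const
      have : (0:ℝ) < min (δ / 2) 1 := lt_min (by linarith) one_pos
      linarith
    obtain ⟨n, hn1, hn2⟩ := (h1.and h2).exists
    have hdyz : g y + K * dist y (u n) < g (u n) := by
      have hb1 : dist y (u n) ≤ δ + dist (u n) z := by
        rw [dist_comm (u n) z]
        exact dist_triangle y z (u n)
      have hb2 : dist (u n) z < m / (2 * K) := lt_of_lt_of_le hn1 (min_le_right _ _)
      have hb3 : K * dist (u n) z < m / 2 := by
        have h5 := mul_lt_mul_of_pos_left hb2 hK
        have h6 : K * (m / (2 * K)) = m / 2 := by field_simp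
        linarith
      have hb4 : g z ≤ g (u n) := le_trans hgz (hLle n)
      have : g y + K * dist y (u n) ≤ g y + K * δ + K * dist (u n) z := by
        have := mul_le_mul_of_nonneg_left hb1 hK.le
        rw [mul_add] at this
        linarith
      calc g y + K * dist y (u n) ≤ g y + K * δ + K * dist (u n) z := this
        _ < g y + K * δ + m := by linarith
        _ = g z := by simp only [hmdef]; ring
        _ ≤ g (u n) := hb4
    have hhm := hmax (u n) (hposn n).1 (hposn n).2 y hdyz
    rw [← hFstep n (hposn n)] at hhm
    have hlow : min (δ / 2) 1 ≤ min (dist y (u n)) 1 := by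
      refine le_min (le_trans (min_le_left _ _) ?_) (min_le_right _ _)
      have : dist y z ≤ dist y (u n) + dist (u n) z := dist_triangle y (u n) z
      have hb : dist (u n) z < δ / 2 := lt_of_lt_of_le hn1 (min_le_left _ _)
      linarith
    have hhigh : 2 * min (dist (u (n+1)) (u n)) 1 < min (δ / 2) 1 := by
      have h7 : min (dist (u (n+1)) (u n)) 1 ≤ dist (u (n+1)) (u n) := min_le_left _ _
      have h8 : dist (u (n+1)) (u n) < (δ / 2 ⊓ 1) / 2 := by
        rw [dist_comm]; exact hn2
      linarith
    linarith
  · rw [dist_comm z x₀]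
    calc K * dist x₀ z ≤ K * (g x₀ / K) := mul_le_mul_of_nonneg_left hdistz hK.le
      _ = g x₀ := by field_simp


/-- Er(f) = inf_{f(x)>0} ( - inf_{‖h‖=1} d⁺f(x,h) ). -/
theorem stmt1 [CompleteSpace X] (f : X → EReal) (hconv : EConvexOn f)
    (hproper : EProper f) (hlsc : LowerSemicontinuous f)
    (hS : {x : X | f x ≤ 0}.Nonempty) :
    ErG f = ⨅ x : {x : X // 0 < f x}, -(sphInf f x.1) := by
  classical
  have hSclosed : IsClosed {y : X | f y ≤ 0} := hlsc.isClosed_preimage 0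
  have hdpos : ∀ x : X, 0 < f x → 0 < infDist x {y : X | f y ≤ 0} := by
    intro x hx
    refine (hSclosed.notMem_iff_infDist_pos hS).1 ?_
    simp only [mem_setOf_eq]
    exact not_le.2 hx
  have hkey : ∀ x : X, 0 < f x → ∀ s ∈ {y : X | f y ≤ 0},
      ((‖s - x‖⁻¹ : ℝ) : EReal) * f x ≤ -(sphInf f x) := by
    intro x hx s hs
    have hsx : s ≠ x := by
      rintro rfl
      exact absurd hx (not_lt.2 hs)
    have ht : (0:ℝ) < ‖s - x‖ := by
      rw [norm_pos_iff]
      exact sub_ne_zero.2 hsx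
    set t := ‖s - x‖ with htdef
    set h : X := t⁻¹ • (s - x) with hhdef
    have hh : ‖h‖ = 1 := by
      rw [hhdef, norm_smul, norm_inv, norm_norm, inv_mul_cancel₀ ht.ne']
    have hxth : x + t • h = s := by
      rw [hhdef, smul_smul, mul_inv_cancel₀ ht.ne', one_smul]
      abel
    have hq : dquot f x h t = ((t⁻¹ : ℝ) : EReal) * (f s - f x) := by
      simp only [dquot, hxth]
    have h2 : f s - f x ≤ 0 - f x := EReal.sub_le_sub hs (le_refl (f x))
    have h3 : sphInf f x ≤ ((t⁻¹ : ℝ) : EReal) * (f s - f x) := by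
      rw [← hq]
      exact le_trans (iInf_le _ (⟨h, hh⟩ : {h : X // ‖h‖ = 1}))
        (iInf_le _ (⟨t, ht⟩ : {t : ℝ // 0 < t}))
    have h4 : sphInf f x ≤ -(((t⁻¹ : ℝ) : EReal) * f x) := by
      calc sphInf f x ≤ ((t⁻¹ : ℝ) : EReal) * (f s - f x) := h3
        _ ≤ ((t⁻¹ : ℝ) : EReal) * (0 - f x) :=
          mul_le_mul_of_nonneg_left h2 (by exact_mod_cast inv_nonneg.2 ht.le)
        _ = -(((t⁻¹ : ℝ) : EReal) * f x) := by
          rw [sub_eq_add_neg, zero_add, mul_neg]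
    exact EReal.le_neg_of_le_neg h4
  apply le_antisymm
  · -- ErG ≤ B
    simp only [ErG]
    refine iInf_mono ?_
    rintro ⟨x, hx⟩
    simp only
    set d := infDist x {y : X | f y ≤ 0} with hd
    have hdp : 0 < d := hdpos x hx
    by_cases htop : f x = ⊤
    · obtain ⟨s₀, hs₀⟩ := hS
      have h5 := hkey x hx s₀ hs₀
      have hs₀x : s₀ ≠ x := by rintro rfl; exact absurd hx (not_lt.2 hs₀)
      have hts₀ : (0:ℝ) < ‖s₀ - x‖ := by rw [norm_pos_iff]; exact sub_ne_zero.2 hs₀x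
      rw [htop, EReal.coe_mul_top_of_pos (by exact_mod_cast inv_pos.2 hts₀)] at h5
      exact le_trans le_top h5
    · have hfx : f x = (((f x).toReal : ℝ) : EReal) := (EReal.coe_toReal htop (hproper.2 x)).symm
      set r := (f x).toReal with hrdef
      have hr : 0 < r := by
        have := hx; rw [hfx] at this; exact_mod_cast this
      rw [hfx, ← EReal.coe_div]
      by_contra hcon
      push_neg at hcon
      obtain ⟨s₀, hs₀⟩ := id hS
      have h5 := hkey x hx s₀ hs₀
      rw [hfx, ← EReal.coe_mul] at h5
      have hneb : -(sphInf f x) ≠ ⊥ := ne_bot_of_gt (lt_of_lt_of_le (EReal.bot_lt_coe _) h5)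
      have hnet : -(sphInf f x) ≠ ⊤ := ne_top_of_lt hcon
      set v := (-(sphInf f x)).toReal with hv
      have hveq : -(sphInf f x) = (v : EReal) := (EReal.coe_toReal hnet hneb).symm
      rw [hveq] at hcon h5
      have hvr : v < r / d := by exact_mod_cast hcon
      have hs₀x : s₀ ≠ x := by rintro rfl; exact absurd hx (not_lt.2 hs₀)
      have hts₀ : (0:ℝ) < ‖s₀ - x‖ := by rw [norm_pos_iff]; exact sub_ne_zero.2 hs₀x
      have hvpos : 0 < v := by
        have h6 : ‖s₀ - x‖⁻¹ * r ≤ v := by exact_mod_cast h5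
        have : (0:ℝ) < ‖s₀ - x‖⁻¹ * r := by positivity
        linarith
      have hdlb : ∀ s ∈ {y : X | f y ≤ 0}, r / v ≤ dist x s := by
        intro s hs
        have h6 := hkey x hx s hs
        rw [hfx, ← EReal.coe_mul, hveq] at h6
        have h6' : ‖s - x‖⁻¹ * r ≤ v := by exact_mod_cast h6
        have hsx : s ≠ x := by rintro rfl; exact absurd hx (not_lt.2 hs)
        have hts : (0:ℝ) < ‖s - x‖ := by rw [norm_pos_iff]; exact sub_ne_zero.2 hsx
        rw [dist_eq_norm, norm_sub_rev, div_le_iff₀ hvpos]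
        have h7 := mul_le_mul_of_nonneg_left h6' hts.le
        rw [← mul_assoc, mul_inv_cancel₀ hts.ne', one_mul] at h7
        linarith
      have hdge : r / v ≤ d := by
        by_contra hd2
        push_neg at hd2
        obtain ⟨s, hsS, hds⟩ := (infDist_lt_iff hS).1 hd2
        exact absurd hds (not_lt.2 (hdlb s hsS))
      have hc1 : v * d < r := by
        rw [lt_div_iff₀ hdp] at hvr; linarith
      have hc2 : r ≤ v * d := by
        rw [div_le_iff₀ hvpos] at hdge; linarith
      linarith
  · -- B ≤ ErG
    simp only [ErG]
    refine le_iInf ?_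
    rintro ⟨x₀, hx₀⟩
    simp only
    set d := infDist x₀ {y : X | f y ≤ 0} with hd
    have hdp : 0 < d := hdpos x₀ hx₀
    by_cases htop : f x₀ = ⊤
    · rw [htop, EReal.top_div_of_pos_ne_top (by exact_mod_cast hdp) (EReal.coe_ne_top _)]
      exact le_top
    have hfx₀ : f x₀ = (((f x₀).toReal : ℝ) : EReal) := (EReal.coe_toReal htop (hproper.2 x₀)).symm
    set r := (f x₀).toReal with hrdef
    have hr : 0 < r := by
      have := hx₀; rw [hfx₀] at this; exact_mod_cast this
    rw [hfx₀, ← EReal.coe_div]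
    by_contra hcon
    push_neg at hcon
    obtain ⟨K, hK1, hK2⟩ := EReal.exists_between_coe_real hcon
    have hK1' : r / d < K := by exact_mod_cast hK1
    have hKpos : 0 < K := lt_trans (div_pos hr hdp) hK1'
    set c := r + 1 with hcdef
    have hc : 0 < c := by linarith
    set g : X → ℝ := fun x => ((f x ⊓ (c : EReal)) ⊔ 0).toReal with hgdef
    have hg0 : ∀ x, 0 ≤ g x := fun x => clampR_nonneg f c x
    have hglsc : LowerSemicontinuous g := clampR_lsc f c hc hlsc
    have hgx₀ : g x₀ = r := by
      simp only [hgdef]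
      rw [hfx₀]
      rw [inf_eq_left.2 (by exact_mod_cast (by linarith : r ≤ c))]
      rw [sup_eq_left.2 (by exact_mod_cast hr.le)]
      exact EReal.toReal_coe r
    have H : ∀ x, 0 < g x → g x ≤ g x₀ → ∃ y, g y + K * dist y x < g x := by
      intro x hgx hgxr
      rw [hgx₀] at hgxr
      have hgxc : g x < c := by linarith
      have hfx : f x = ((g x : ℝ) : EReal) := clampR_eq f c x hgx hgxc
      have hfxpos : 0 < f x := by rw [hfx]; exact_mod_cast hgx
      have hBx : (K : EReal) < -(sphInf f x) :=
        lt_of_lt_of_le hK2 (iInf_le _ (⟨x, hfxpos⟩ : {x : X // 0 < f x}))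
      have hs1 : sphInf f x < -(K : EReal) := EReal.lt_neg_of_lt_neg hBx
      obtain ⟨⟨h, hh⟩, hlt⟩ := iInf_lt_iff.1 hs1
      obtain ⟨⟨t, ht⟩, hlt2⟩ := iInf_lt_iff.1 hlt
      simp only [dquot] at hlt2
      have hnetop : f (x + t • h) ≠ ⊤ := by
        intro hT
        rw [hT, hfx, EReal.top_sub_coe, EReal.coe_mul_top_of_pos
          (by exact_mod_cast inv_pos.2 ht)] at hlt2
        exact absurd hlt2 not_top_lt
      have hnebot := hproper.2 (x + t • h)
      have hfa : f (x + t • h) = (((f (x + t • h)).toReal : ℝ) : EReal) :=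
        (EReal.coe_toReal hnetop hnebot).symm
      set a := (f (x + t • h)).toReal with hadef
      rw [hfa, hfx, ← EReal.coe_sub, ← EReal.coe_mul] at hlt2
      have hq : t⁻¹ * (a - g x) < -K := by exact_mod_cast hlt2
      have haux : a < g x - K * t := by
        have h3 := mul_lt_mul_of_pos_left hq ht
        rw [← mul_assoc, mul_inv_cancel₀ ht.ne', one_mul] at h3
        nlinarith
      set lam := min 1 (g x / (2 * K * t)) with hlamdef
      have hlampos : 0 < lam := lt_min one_pos (by positivity)
      have hlamle : lam ≤ 1 := min_le_left _ _
      have hlamle2 : lam ≤ g x / (2 * K * t) := min_le_right _ _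
      have hKlt : K * (lam * t) ≤ g x / 2 := by
        have h8 := mul_le_mul_of_nonneg_right hlamle2 ht.le
        have h9 : g x / (2 * K * t) * t = g x / (2 * K) := by
          field_simp
        rw [h9] at h8
        have h10 : K * (g x / (2 * K)) = g x / 2 := by field_simp
        nlinarith
      set y := x + (lam * t) • h with hydef
      have hcomb : y = (1 - lam) • x + lam • (x + t • h) := by
        rw [hydef]; module
      have hconv' := hconv x (x + t • h) (1 - lam) lam (by linarith) hlampos.le (by ring)
      rw [← hcomb] at hconv'
      have hupper : f y < ((g x - K * (lam * t) : ℝ) : EReal) := by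
        refine lt_of_le_of_lt hconv' ?_
        rw [hfx, hfa, ← EReal.coe_mul, ← EReal.coe_mul, ← EReal.coe_add]
        apply EReal.coe_lt_coe_iff.2
        nlinarith [mul_lt_mul_of_pos_left haux hlampos]
      have hbpos : 0 < g x - K * (lam * t) := by linarith
      have hgy : g y < g x - K * (lam * t) := clampR_lt f c y hbpos hupper
      refine ⟨y, ?_⟩
      have hdist : dist y x = lam * t := by
        rw [hydef, dist_eq_norm, add_sub_cancel_left, norm_smul, hh, mul_one,
          Real.norm_eq_abs, abs_of_pos (by positivity)]
      rw [hdist]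
      linarith
    obtain ⟨z, hz1, hz2⟩ := descent g hg0 hglsc K hKpos x₀ H
    have hzS : z ∈ {y : X | f y ≤ 0} := (clampR_le_zero_iff f c hc z).1 hz1
    have hd_le : d ≤ dist x₀ z := infDist_le_dist_of_mem hzS
    rw [hgx₀] at hz2
    rw [dist_comm z x₀] at hz2
    have h11 : K * d ≤ r := le_trans (mul_le_mul_of_nonneg_left hd_le hKpos.le) hz2
    have h12 : r < K * d := by
      rw [div_lt_iff₀ hdp] at hK1'; linarith
    linarith
end

section
/- Let X be a Banach space, f : X → ℝ ∪ {+∞} proper lower semicontinuous convex with S_f := {x : f(x) ≤ 0} nonempty, and let x̄ ∈ bdry(S_f). Then the local error bound modulus Er(f, x̄) := liminf_{x → x̄, f(x)>0} f(x)/d(x, S_f) satisfies Er(f, x̄) = liminf_{x → x̄, f(x)>0} ( − inf_{‖h‖=1} d⁺f(x, h) ). -/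
open Filter Topology Metric Set
open scoped ENNReal
open ENNReal

variable {X : Type*} [NormedAddCommGroup X] [NormedSpace ℝ X]

noncomputable def toE (a : EReal) : ℝ≥0∞ := if a = ⊤ then ⊤ else ENNReal.ofReal a.toReal

lemma toE_coe (r : ℝ) : toE (r : EReal) = ENNReal.ofReal r := by
  simp [toE]

lemma toE_top : toE ⊤ = ⊤ := by simp [toE]

lemma lt_toE_iff {b : ℝ≥0∞} (hb : b ≠ ⊤) (a : EReal) :
    b < toE a ↔ ((b.toReal : ℝ) : EReal) < a := by
  induction a with
  | bot =>
      simp only [toE, if_neg (by simp : (⊥:EReal) ≠ ⊤), EReal.toReal_bot, ENNReal.ofReal_zero]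
      simp [not_lt_bot, (zero_le (a := b)).not_gt]
  | coe r =>
      rw [toE_coe]
      rw [ENNReal.lt_ofReal_iff_toReal_lt hb, EReal.coe_lt_coe_iff]
  | top =>
      rw [toE_top]
      simp [lt_top_iff_ne_top, hb, EReal.coe_lt_top]

lemma toE_lsc {X : Type*} [TopologicalSpace X] {f : X → EReal} (hf : LowerSemicontinuous f) :
    LowerSemicontinuous (fun x => toE (f x)) := by
  intro x b hb
  have hbt : b ≠ ⊤ := hb.ne_top
  have hb : b < toE (f x) := hb
  rw [lt_toE_iff hbt] at hb
  filter_upwards [hf x _ hb] with y hy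
  show b < toE (f y); rw [lt_toE_iff hbt]; exact hy

theorem ekeland {α : Type*} [MetricSpace α] [CompleteSpace α] (g : α → ℝ≥0∞)
    (hg : LowerSemicontinuous g) (c : ℝ≥0∞) (hc0 : c ≠ 0) (hct : c ≠ ⊤)
    (x₀ : α) (h₀ : g x₀ ≠ ⊤) :
    ∃ z, g z + c * edist z x₀ ≤ g x₀ ∧ ∀ y, g z ≤ g y + c * edist y z := by
  classical
  set F : α → Set α := fun x => {y | g y + c * edist y x ≤ g x} with hF
  have hrefl : ∀ x, x ∈ F x := by intro x; simp [hF]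
  have htrans : ∀ {x y w}, y ∈ F x → w ∈ F y → w ∈ F x := by
    intro x y w hyx hwy
    simp only [hF, mem_setOf_eq] at *
    calc g w + c * edist w x ≤ g w + c * (edist w y + edist y x) := by
          gcongr; exact edist_triangle _ _ _
      _ = (g w + c * edist w y) + c * edist y x := by ring
      _ ≤ g y + c * edist y x := by gcongr
      _ ≤ g x := hyx
  have hFg : ∀ {x y}, y ∈ F x → g y ≤ g x := fun {x y} h =>
    le_trans (le_add_right le_rfl) h
  set m : α → ℝ≥0∞ := fun x => ⨅ y ∈ F x, g y with hm
  have step : ∀ (n : ℕ) (x : α), ∃ y, y ∈ F x ∧ g y ≤ m x + (2 : ℝ≥0∞)⁻¹ ^ n := by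
    intro n x
    by_cases h : m x + (2 : ℝ≥0∞)⁻¹ ^ n = ⊤
    · exact ⟨x, hrefl x, by rw [h]; exact le_top⟩
    · have hmx : m x < m x + (2 : ℝ≥0∞)⁻¹ ^ n := by
        refine ENNReal.lt_add_right (fun ht => h (by rw [ht, top_add])) ?_
        exact pow_ne_zero _ (by norm_num)
      rw [hm] at hmx
      simp only [iInf_lt_iff] at hmx
      obtain ⟨y, hyF, hy⟩ := hmx
      exact ⟨y, hyF, hy.le⟩
  set seq : ℕ → α := fun n => Nat.rec x₀ (fun n z => (step n z).choose) n with hseq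
  have hseq0 : seq 0 = x₀ := rfl
  have hseqS : ∀ n, seq (n + 1) = (step n (seq n)).choose := fun n => rfl
  have h1 : ∀ n, seq (n + 1) ∈ F (seq n) := fun n => (step n (seq n)).choose_spec.1
  have h2 : ∀ n, g (seq (n + 1)) ≤ m (seq n) + (2 : ℝ≥0∞)⁻¹ ^ n :=
    fun n => (step n (seq n)).choose_spec.2
  have chain : ∀ n k, n ≤ k → seq k ∈ F (seq n) := by
    intro n k hnk
    induction k with
    | zero => rw [Nat.le_zero.mp hnk]; exact hrefl _
    | succ k ih =>
      rcases Nat.lt_or_ge n (k + 1) with h | h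
      · exact htrans (ih (Nat.lt_succ_iff.mp h)) (h1 k)
      · rw [le_antisymm hnk h]; exact hrefl _
  have gfin : ∀ n, g (seq n) ≠ ⊤ := fun n =>
    fun ht => h₀ (top_le_iff.mp (ht ▸ hFg (chain 0 n (Nat.zero_le n))))
  -- Cauchy
  have hanti : Antitone (fun n => g (seq n)) := antitone_nat_of_succ_le fun n => hFg (h1 n)
  set L := ⨅ n, g (seq n) with hL
  have htend : Tendsto (fun n => g (seq n)) atTop (𝓝 L) := tendsto_atTop_iInf hanti
  have hLfin : L ≠ ⊤ := fun ht => gfin 0 (top_le_iff.mp (ht ▸ iInf_le _ 0))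
  have hcauchy : CauchySeq seq := by
    rw [EMetric.cauchySeq_iff]
    intro ε hε
    set ε' := min ε 1 with hε'
    have hε'0 : ε' ≠ 0 := (lt_min hε one_pos).ne'
    have hε't : ε' ≠ ⊤ := by simp [hε']
    have hkey : ∀ᶠ n in atTop, g (seq n) < L + c * (ε' / 2) := by
      refine htend.eventually_lt_const ?_
      refine ENNReal.lt_add_right hLfin ?_
      simp [hc0, hε'0, ENNReal.div_eq_zero_iff, hε't]
    obtain ⟨N, hN⟩ := hkey.exists_forall_of_atTop
    refine ⟨N, fun k hk n hn => ?_⟩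
    -- reduce to ordered case
    have key : ∀ i j, N ≤ i → i ≤ j → edist (seq j) (seq i) < ε := by
      intro i j hNi hij
      have hmem := chain i j hij
      have : c * edist (seq j) (seq i) ≤ g (seq i) - g (seq j) :=
        ENNReal.le_sub_of_add_le_left (gfin j) hmem
      have hgi : g (seq i) < L + c * (ε' / 2) := hN i hNi
      have hgj : L ≤ g (seq j) := iInf_le _ j
      have h3 : c * edist (seq j) (seq i) ≤ c * (ε' / 2) := by
        refine this.trans ?_
        calc g (seq i) - g (seq j) ≤ (L + c * (ε' / 2)) - L := tsub_le_tsub hgi.le hgj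
          _ = c * (ε' / 2) := by rw [ENNReal.add_sub_cancel_left hLfin]
      have h4 : edist (seq j) (seq i) ≤ ε' / 2 :=
        (ENNReal.mul_le_mul_iff_right hc0 hct).mp h3
      calc edist (seq j) (seq i) ≤ ε' / 2 := h4
        _ < ε' := ENNReal.half_lt_self hε'0 hε't
        _ ≤ ε := min_le_left _ _
    rcases le_total k n with h | h
    · rw [edist_comm]; exact key k n hk h
    · exact key n k hn h
  obtain ⟨z, hz⟩ := cauchySeq_tendsto_of_complete hcauchy
  have zmem : ∀ n, z ∈ F (seq n) := by
    intro n
    have hlsc2 : LowerSemicontinuous (fun y => g y + c * edist y (seq n)) := by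
      refine hg.add ?_
      refine Continuous.lowerSemicontinuous ?_
      exact (ENNReal.continuous_const_mul hct).comp (continuous_id.edist continuous_const)
    show g z + c * edist z (seq n) ≤ g (seq n)
    refine le_of_forall_lt fun b hb => ?_
    have := hlsc2 z b hb
    have hev := hz.eventually this
    have hev2 : ∀ᶠ k in atTop, g (seq k) + c * edist (seq k) (seq n) ≤ g (seq n) :=
      eventually_atTop.mpr ⟨n, fun k hk => chain n k hk⟩
    obtain ⟨k, hk1, hk2⟩ := (hev.and hev2).exists
    exact hk1.trans_le hk2
  refine ⟨z, by rw [← hseq0]; exact zmem 0, ?_⟩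
  by_contra hcon
  push_neg at hcon
  obtain ⟨y, hy⟩ := hcon
  have hyz : y ∈ F z := hy.le
  have hyn : ∀ n, y ∈ F (seq n) := fun n => htrans (zmem n) hyz
  have hgy : ∀ n, g z ≤ g y + (2 : ℝ≥0∞)⁻¹ ^ n := by
    intro n
    calc g z ≤ g (seq (n + 1)) := hFg (zmem (n + 1))
      _ ≤ m (seq n) + (2 : ℝ≥0∞)⁻¹ ^ n := h2 n
      _ ≤ g y + (2 : ℝ≥0∞)⁻¹ ^ n := by gcongr; exact iInf₂_le y (hyn n)
  have hgzy : g z ≤ g y := by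
    have h5 : Tendsto (fun n : ℕ => (2 : ℝ≥0∞)⁻¹ ^ n) atTop (𝓝 0) :=
      ENNReal.tendsto_pow_atTop_nhds_zero_of_lt_one (by norm_num)
    have h6 : Tendsto (fun n : ℕ => g y + (2 : ℝ≥0∞)⁻¹ ^ n) atTop (𝓝 (g y)) := by
      simpa using (tendsto_const_nhds (x := g y) (f := atTop (α := ℕ))).add h5
    exact ge_of_tendsto' h6 hgy
  exact absurd (lt_of_le_of_lt (le_add_right le_rfl) (hy.trans_le hgzy)) (lt_irrefl _)

lemma dquot_mono (f : X → EReal) (hconv : EConvexOn f) (hproper : EProper f)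
    (x h : X) (r : ℝ) (hx : f x = (r : EReal)) {s t : ℝ} (hs : 0 < s) (hst : s ≤ t) :
    dquot f x h s ≤ dquot f x h t := by
  have ht : 0 < t := hs.trans_le hst
  cases hF : f (x + t • h) with
  | top =>
      have : dquot f x h t = ⊤ := by
        rw [dquot, hF, hx, EReal.top_sub_coe, EReal.coe_mul_top_of_pos (by positivity)]
      rw [this]; exact le_top
  | bot => exact absurd hF (hproper.2 _)
  | coe q =>
      set b := s / t with hb
      have hb0 : 0 ≤ b := by positivity
      have hb1 : b ≤ 1 := by rw [hb, div_le_one ht]; exact hst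
      have hab : (1 - b) + b = 1 := by ring
      have hpt : (1 - b) • x + b • (x + t • h) = x + s • h := by
        rw [smul_add, ← add_assoc, ← add_smul, sub_add_cancel, one_smul, smul_smul]
        congr 1
        rw [hb, div_mul_cancel₀ _ ht.ne']
      have hcv := hconv x (x + t • h) (1 - b) b (by linarith) hb0 hab
      rw [hpt, hx, hF, ← EReal.coe_mul, ← EReal.coe_mul, ← EReal.coe_add] at hcv
      cases hG : f (x + s • h) with
      | top => rw [hG] at hcv; exact absurd (top_le_iff.mp hcv) (EReal.coe_ne_top _)
      | bot => exact absurd hG (hproper.2 _)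
      | coe p =>
          rw [hG, EReal.coe_le_coe_iff] at hcv
          rw [dquot, dquot, hG, hF, hx, ← EReal.coe_sub, ← EReal.coe_sub,
            ← EReal.coe_mul, ← EReal.coe_mul, EReal.coe_le_coe_iff]
          have hkey : p - r ≤ b * (q - r) := by nlinarith
          calc s⁻¹ * (p - r) ≤ s⁻¹ * (b * (q - r)) := by
                apply mul_le_mul_of_nonneg_left hkey (by positivity)
            _ = t⁻¹ * (q - r) := by
                rw [hb]; field_simp

lemma ptwise [Nontrivial X] (f : X → EReal) (hproper : EProper f)
    (hlsc : LowerSemicontinuous f) (hS : {y : X | f y ≤ 0}.Nonempty)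
    (x : X) (hx : 0 < f x) :
    f x / ((Metric.infDist x {y : X | f y ≤ 0} : ℝ) : EReal) ≤ -(sphInf f x) := by
  set S := {y : X | f y ≤ 0} with hSdef
  have hScl : IsClosed S := hlsc.isClosed_preimage 0
  have hxS : x ∉ S := fun hmem => hx.not_ge hmem
  have hd : 0 < Metric.infDist x S := (hScl.notMem_iff_infDist_pos hS).mp hxS
  set d := Metric.infDist x S with hddef
  cases hfx : f x with
  | bot => exact absurd hfx (hproper.2 x)
  | top =>
      -- sphInf = ⊥
      obtain ⟨h₀, hh₀⟩ := exists_norm_eq X (zero_le_one)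
      have hsph : sphInf f x = ⊥ := by
        refine le_bot_iff.mp ?_
        refine le_trans (iInf_le _ ⟨h₀, hh₀⟩) ?_
        refine le_trans (iInf_le _ ⟨(1 : ℝ), one_pos⟩) ?_
        rw [dquot, hfx, EReal.sub_top]
        simp
      rw [hsph]
      simp
  | coe r =>
      have hr : 0 < r := by rw [hfx] at hx; exact_mod_cast hx
      -- main bound for any t > d
      have main : ∀ t : ℝ, d < t → sphInf f x ≤ (((-r) / t : ℝ) : EReal) := by
        intro t htd
        obtain ⟨s, hsS, hst⟩ := (Metric.infDist_lt_iff hS).mp (htd.trans_le le_rfl)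
        have hsx : s ≠ x := fun he => hxS (he ▸ hsS)
        set u := dist x s with hu
        have hu0 : 0 < u := dist_pos.mpr (Ne.symm hsx)
        have hnorm : ‖s - x‖ = u := by rw [hu, dist_eq_norm, norm_sub_rev]
        have hn0 : ‖s - x‖ ≠ 0 := by rw [hnorm]; exact hu0.ne'
        set e := ‖s - x‖⁻¹ • (s - x) with he
        have hen : ‖e‖ = 1 := by
          rw [he, norm_smul, norm_inv, norm_norm, inv_mul_cancel₀ hn0]
        have hpt : x + u • e = s := by
          rw [he, smul_smul, ← hnorm, mul_inv_cancel₀ (hnorm ▸ hu0.ne' : ‖s-x‖ ≠ 0), one_smul,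
            add_sub_cancel]
        have h1 : sphInf f x ≤ dquot f x e u := by
          refine le_trans (iInf_le _ ⟨e, hen⟩) ?_
          exact iInf_le (fun t : {t : ℝ // 0 < t} => dquot f x e t) ⟨u, hu0⟩
        have h2 : dquot f x e u ≤ (((-r) / u : ℝ) : EReal) := by
          rw [dquot, hpt, hfx]
          have hfs : f s - (r : EReal) ≤ (((-r) : ℝ) : EReal) := by
            calc f s - (r : EReal) ≤ 0 - (r : EReal) := EReal.sub_le_sub hsS le_rfl
              _ = (((-r) : ℝ) : EReal) := by
                  rw [show (0 : EReal) = ((0 : ℝ) : EReal) by simp, ← EReal.coe_sub]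
                  norm_num
          calc ((u⁻¹ : ℝ) : EReal) * (f s - (r : EReal))
              ≤ ((u⁻¹ : ℝ) : EReal) * (((-r) : ℝ) : EReal) :=
                mul_le_mul_of_nonneg_left hfs (by exact_mod_cast (inv_pos.mpr hu0).le)
            _ = (((-r) / u : ℝ) : EReal) := by rw [← EReal.coe_mul]; congr 1; ring
        have h3 : ((-r) / u : ℝ) ≤ ((-r) / t : ℝ) := by
          rw [neg_div, neg_div, neg_le_neg_iff]
          exact div_le_div_of_nonneg_left hr.le hu0 hst.le
        exact h1.trans (h2.trans (by exact_mod_cast h3))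
      -- pass to the limit t → d⁺
      have hlim : Tendsto (fun t : ℝ => ((((-r) / t : ℝ)) : EReal)) (𝓝[>] d)
          (𝓝 (((-r) / d : ℝ) : EReal)) := by
        refine (Continuous.tendsto continuous_coe_real_ereal _).comp ?_
        exact ((tendsto_const_nhds.div tendsto_id hd.ne').mono_left nhdsWithin_le_nhds)
      have hle : sphInf f x ≤ (((-r) / d : ℝ) : EReal) := by
        refine ge_of_tendsto hlim ?_
        filter_upwards [self_mem_nhdsWithin] with t ht
        exact main t ht
      have : ((r : ℝ) : EReal) / ((d : ℝ) : EReal) = ((r / d : ℝ) : EReal) :=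
        (EReal.coe_div r d).symm
      rw [this]
      refine EReal.le_neg_of_le_neg ?_
      refine hle.trans_eq ?_
      rw [← EReal.coe_neg]
      congr 1
      ring

lemma key [CompleteSpace X] (f : X → EReal) (hconv : EConvexOn f) (hproper : EProper f)
    (hlsc : LowerSemicontinuous f) (hS : {y : X | f y ≤ 0}.Nonempty)
    {b θ : ℝ} (hθ0 : 0 < θ) (hθ1 : θ < 1) {x : X} (hfx : 0 < f x)
    (hlt : f x / ((Metric.infDist x {y : X | f y ≤ 0} : ℝ) : EReal) < (b : EReal)) :
    ∃ z, dist z x ≤ θ * Metric.infDist x {y : X | f y ≤ 0} ∧ 0 < f z ∧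
      -(sphInf f z) ≤ ((b / θ : ℝ) : EReal) := by
  classical
  set S := {y : X | f y ≤ 0} with hSdef
  have hScl : IsClosed S := hlsc.isClosed_preimage 0
  have hxS : x ∉ S := fun hmem => hfx.not_ge hmem
  set d := Metric.infDist x S with hddef
  have hd : 0 < d := (hScl.notMem_iff_infDist_pos hS).mp hxS
  -- f x is a finite real
  have hfxne : f x ≠ ⊤ := by
    intro htop
    rw [htop] at hlt
    have : (⊤ : EReal) / ((d : ℝ) : EReal) = ⊤ := by
      rw [div_eq_mul_inv, ← EReal.coe_inv, mul_comm]
      exact EReal.coe_mul_top_of_pos (inv_pos.mpr hd)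
    rw [this] at hlt
    exact absurd hlt (by simp)
  obtain ⟨r, hr⟩ : ∃ r : ℝ, f x = (r : EReal) := by
    cases hv : f x with
    | bot => exact absurd hv (hproper.2 x)
    | top => exact absurd hv hfxne
    | coe r => exact ⟨r, rfl⟩
  have hr0 : 0 < r := by rw [hr] at hfx; exact_mod_cast hfx
  have hrd : r / d < b := by
    rw [hr, ← EReal.coe_div, EReal.coe_lt_coe_iff] at hlt
    exact hlt
  have hb0 : 0 < b := lt_of_le_of_lt (by positivity) hrd
  set c₀ : ℝ := r / (θ * d) with hc₀def
  have hc₀ : 0 < c₀ := by positivity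
  have hc₀b : c₀ < b / θ := by
    rw [hc₀def, mul_comm θ d, ← div_div]
    exact div_lt_div_of_pos_right hrd hθ0 |>.trans_le le_rfl
  -- Ekeland
  set g : X → ℝ≥0∞ := fun y => toE (f y) with hgdef
  have hglsc : LowerSemicontinuous g := toE_lsc hlsc
  have hgx : g x = ENNReal.ofReal r := by rw [hgdef]; simp only [hr, toE_coe]
  set c : ℝ≥0∞ := ENNReal.ofReal c₀ with hcdef
  have hc0 : c ≠ 0 := by rw [hcdef]; exact (ENNReal.ofReal_pos.mpr hc₀).ne'
  have hct : c ≠ ⊤ := ofReal_ne_top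
  obtain ⟨z, hz1, hz2⟩ := ekeland g hglsc c hc0 hct x (by rw [hgx]; exact ofReal_ne_top)
  -- distance bound
  have hdist : dist z x ≤ θ * d := by
    have h1 : c * edist z x ≤ ENNReal.ofReal r := le_trans (le_add_self) (hgx ▸ hz1)
    have h2 : edist z x ≤ ENNReal.ofReal r / c := by
      rw [ENNReal.le_div_iff_mul_le (Or.inl hc0) (Or.inl hct), mul_comm]
      exact h1
    rw [hcdef, ← ENNReal.ofReal_div_of_pos hc₀, hc₀def] at h2
    have : r / (r / (θ * d)) = θ * d := by
      field_simp
    rw [this, edist_dist] at h2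
    exact (ENNReal.ofReal_le_ofReal_iff (by positivity)).mp h2
  -- z not in S
  have hzS : z ∉ S := by
    intro hmem
    have h1 : d ≤ dist x z := Metric.infDist_le_dist_of_mem hmem
    rw [dist_comm] at h1
    nlinarith
  have hfz : 0 < f z := not_le.mp hzS
  -- f z finite
  have hgz : g z ≤ ENNReal.ofReal r := le_trans (le_add_right le_rfl) (hgx ▸ hz1)
  obtain ⟨v, hv⟩ : ∃ v : ℝ, f z = (v : EReal) := by
    cases hw : f z with
    | bot => exact absurd hw (hproper.2 z)
    | coe v => exact ⟨v, rfl⟩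
    | top =>
        rw [hgdef] at hgz
        simp only [hw, toE_top] at hgz
        exact absurd (top_le_iff.mp hgz) ofReal_ne_top
  have hv0 : 0 < v := by rw [hv] at hfz; exact_mod_cast hfz
  have hgzv : g z = ENNReal.ofReal v := by rw [hgdef]; simp only [hv, toE_coe]
  -- positivity neighborhood
  obtain ⟨δ, hδ0, hδ⟩ : ∃ δ > 0, ∀ y, dist y z < δ → 0 < f y := by
    have := hlsc z 0 (by show (0:EReal) < f z; rw [hv]; exact_mod_cast hv0)
    rw [Metric.eventually_nhds_iff] at this
    obtain ⟨δ, hδ0, hδ⟩ := this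
    exact ⟨δ, hδ0, fun y hy => hδ hy⟩
  refine ⟨z, hdist, hfz, ?_⟩
  -- directional derivative bound
  have hsph : (((-c₀ : ℝ)) : EReal) ≤ sphInf f z := by
    refine le_iInf fun e => ?_
    refine le_iInf fun t => ?_
    obtain ⟨e, he⟩ := e
    obtain ⟨t, ht⟩ := t
    set t' : ℝ := min t (δ / 2) with ht'def
    have ht'0 : 0 < t' := lt_min ht (by positivity)
    have ht't : t' ≤ t := min_le_left _ _
    have ht'δ : t' < δ := lt_of_le_of_lt (min_le_right _ _) (by linarith)
    refine le_trans ?_ (dquot_mono f hconv hproper z e v hv ht'0 ht't)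
    -- bound dquot at t'
    have hyz : dist (z + t' • e) z = t' := by
      rw [dist_eq_norm, add_sub_cancel_left, norm_smul, he, mul_one,
        Real.norm_of_nonneg ht'0.le]
    have hfy : 0 < f (z + t' • e) := hδ _ (by rw [hyz]; exact ht'δ)
    cases hw : f (z + t' • e) with
    | bot => exact absurd hw (hproper.2 _)
    | top =>
        rw [dquot, hw, hv, EReal.top_sub_coe, EReal.coe_mul_top_of_pos
          (by positivity : (0:ℝ) < t'⁻¹)]
        exact le_top
    | coe w =>
        have hw0 : 0 < w := by rw [hw] at hfy; exact_mod_cast hfy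
        have hek := hz2 (z + t' • e)
        rw [hgzv, hgdef] at hek
        simp only [hw, toE_coe] at hek
        have hedist : edist (z + t' • e) z = ENNReal.ofReal t' := by
          rw [edist_dist, hyz]
        rw [hedist, hcdef, ← ENNReal.ofReal_mul hc₀.le, ← ENNReal.ofReal_add hw0.le
          (by positivity)] at hek
        have hreal : v ≤ w + c₀ * t' :=
          (ENNReal.ofReal_le_ofReal_iff (by positivity)).mp hek
        rw [dquot, hw, hv, ← EReal.coe_sub, ← EReal.coe_mul, EReal.coe_le_coe_iff]
        have h6 : -(c₀ * t') / t' ≤ (w - v) / t' := by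
          apply div_le_div_of_nonneg_right ?_ ht'0.le
          · linarith
        rw [neg_div, mul_div_assoc, div_self ht'0.ne', mul_one] at h6
        calc -c₀ ≤ (w - v) / t' := h6
          _ = t'⁻¹ * (w - v) := by rw [inv_mul_eq_div]
  -- conclude
  calc -(sphInf f z) ≤ -(((-c₀ : ℝ)) : EReal) := EReal.neg_le_neg_iff.mpr hsph
    _ = ((c₀ : ℝ) : EReal) := by rw [← EReal.coe_neg]; norm_num
    _ ≤ ((b / θ : ℝ) : EReal) := by exact_mod_cast hc₀b.le


/-- local error bound modulus formula. -/
theorem stmt2 [CompleteSpace X] (f : X → EReal) (hconv : EConvexOn f)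
    (hproper : EProper f) (hlsc : LowerSemicontinuous f)
    (hS : {x : X | f x ≤ 0}.Nonempty) (xb : X)
    (hxb : xb ∈ frontier {x : X | f x ≤ 0}) :
    ErL f xb =
      Filter.liminf (fun x => -(sphInf f x))
        (𝓝 xb ⊓ Filter.principal {x : X | 0 < f x}) := by
  rcases subsingleton_or_nontrivial X with hX | hX
  · exfalso
    have huniv : {x : X | f x ≤ 0} = univ := eq_univ_of_forall fun y => by
      obtain ⟨s, hs⟩ := hS
      rwa [Subsingleton.elim y s]
    rw [huniv, frontier_univ] at hxb
    exact hxb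
  have hScl : IsClosed {y : X | f y ≤ 0} := hlsc.isClosed_preimage 0
  have hxbS : f xb ≤ 0 := by
    have h1 : xb ∈ closure {x : X | f x ≤ 0} := frontier_subset_closure hxb
    rwa [hScl.closure_eq] at h1
  refine le_antisymm ?_ ?_
  · rw [ErL]
    refine liminf_le_liminf ?_
    rw [eventually_inf_principal]
    exact Eventually.of_forall fun x hx => ptwise f hproper hlsc hS x hx
  · have hE0 : (0 : EReal) ≤ ErL f xb := by
      rw [ErL]
      refine le_liminf_of_le (by isBoundedDefault) ?_
      rw [eventually_inf_principal]
      refine Eventually.of_forall fun x hx => EReal.div_nonneg hx.le ?_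
      exact_mod_cast Metric.infDist_nonneg
    have claim : ∀ b' θ : ℝ, ErL f xb < (b' : EReal) → 0 < θ → θ < 1 →
        Filter.liminf (fun x => -(sphInf f x))
          (𝓝 xb ⊓ Filter.principal {x : X | 0 < f x}) ≤ ((b' / θ : ℝ) : EReal) := by
      intro b' θ hb' hθ0 hθ1
      refine liminf_le_of_frequently_le ?_
      have hbasis := (Metric.nhds_basis_ball (x := xb)).inf_principal {x : X | 0 < f x}
      rw [hbasis.frequently_iff]
      rintro δ hδ0
      rw [ErL] at hb'
      have hfreq := frequently_lt_of_liminf_lt (by isBoundedDefault) hb'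
      rw [hbasis.frequently_iff] at hfreq
      obtain ⟨x, hx1, hx3⟩ := hfreq (δ / 2) (by positivity)
      obtain ⟨hx1, hx2⟩ := hx1
      obtain ⟨z, hz1, hz2, hz3⟩ := key f hconv hproper hlsc hS hθ0 hθ1 hx2 hx3
      refine ⟨z, ⟨?_, hz2⟩, hz3⟩
      have hdx : Metric.infDist x {y : X | f y ≤ 0} ≤ dist x xb :=
        Metric.infDist_le_dist_of_mem hxbS
      have htri : dist z xb ≤ dist z x + dist x xb := dist_triangle _ _ _
      rw [mem_ball] at hx1 ⊢
      nlinarith [Metric.infDist_nonneg (x := x) (s := {y : X | f y ≤ 0})]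
    by_contra hcon
    push_neg at hcon
    obtain ⟨q, hq1, hq2⟩ := EReal.exists_rat_btwn_of_lt hcon
    obtain ⟨p, hp1, hp2⟩ := EReal.exists_rat_btwn_of_lt hq1
    have hpq : (p : ℝ) < (q : ℝ) := by exact_mod_cast EReal.coe_lt_coe_iff.mp hp2
    have hp0 : (0 : ℝ) < (p : ℝ) := by
      have := hE0.trans_lt hp1
      exact_mod_cast this
    have hθ0 : (0 : ℝ) < (p : ℝ) / (q : ℝ) := div_pos hp0 (by linarith)
    have hθ1 : (p : ℝ) / (q : ℝ) < 1 := by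
      rw [div_lt_one (by linarith)]; exact hpq
    have hc := claim (p : ℝ) ((p : ℝ) / (q : ℝ)) hp1 hθ0 hθ1
    have heq : (p : ℝ) / ((p : ℝ) / (q : ℝ)) = (q : ℝ) := by
      field_simp
    rw [heq] at hc
    exact absurd (hc.trans_lt hq2) (lt_irrefl _)
end

section
/- Let X be a Banach space, f : X → ℝ ∪ {+∞} proper lower semicontinuous convex, and x̄ ∈ X with f(x̄) = 0. If inf_{‖h‖=1} d⁺f(x̄, h) > 0, then S_f := {x : f(x) ≤ 0} = {x̄} and Er(f, x̄) ≥ inf_{‖h‖=1} d⁺f(x̄, h). -/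
/-!
Since `d⁺f(x̄, h)` is an infimum over `t > 0` of difference quotients, evaluating it at the unit
vector `h = (x - x̄)/‖x - x̄‖` with step `t = ‖x - x̄‖` gives `f x ≥ sphInf f x̄ * ‖x - x̄‖` for every
`x ≠ x̄`. A positive `sphInf` therefore forces `S_f = {x̄}`, and then `d(x, S_f) = ‖x - x̄‖`, so every
quotient in the `liminf` defining `Er(f, x̄)` is at least `sphInf f x̄`.
-/

open Filter Topology Metric Set

variable {X : Type*} [NormedAddCommGroup X] [NormedSpace ℝ X]

theorem dirDeriv_le_dquot (f : X → EReal) (x h : X) {t : ℝ} (ht : 0 < t) :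
    dirDeriv f x h ≤ dquot f x h t :=
  iInf_le (fun t : {t : ℝ // 0 < t} => dquot f x h t) ⟨t, ht⟩

theorem sphInf_le_dirDeriv (f : X → EReal) (x : X) {h : X} (hh : ‖h‖ = 1) :
    sphInf f x ≤ dirDeriv f x h :=
  iInf_le (fun h : {h : X // ‖h‖ = 1} => dirDeriv f x h) ⟨h, hh⟩

theorem sphInf_le_div_norm_sub {f : X → EReal} {x₀ : X} (hx₀ : f x₀ = 0) {x : X} (hx : x ≠ x₀) :
    sphInf f x₀ ≤ f x / ((‖x - x₀‖ : ℝ) : EReal) := by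
  set t := ‖x - x₀‖
  have ht : 0 < t := norm_pos_iff.mpr (sub_ne_zero.mpr hx)
  have hunit : ‖t⁻¹ • (x - x₀)‖ = 1 := by
    rw [norm_smul, norm_inv, norm_norm, inv_mul_cancel₀ ht.ne']
  have hstep : x₀ + t • t⁻¹ • (x - x₀) = x := by
    rw [smul_smul, mul_inv_cancel₀ ht.ne', one_smul, add_sub_cancel]
  calc sphInf f x₀ ≤ dirDeriv f x₀ (t⁻¹ • (x - x₀)) := sphInf_le_dirDeriv f x₀ hunit
    _ ≤ dquot f x₀ (t⁻¹ • (x - x₀)) t := dirDeriv_le_dquot f x₀ _ ht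
    _ = f x / (t : EReal) := by
      rw [dquot, hstep, hx₀, sub_zero, EReal.div_eq_inv_mul, ← EReal.coe_inv]

theorem setOf_nonpos_eq_singleton_of_sphInf_pos {f : X → EReal} {x₀ : X} (hx₀ : f x₀ = 0)
    (hpos : 0 < sphInf f x₀) : {x : X | f x ≤ 0} = {x₀} := by
  refine Set.Subset.antisymm (fun x hfx => ?_) (by simp [hx₀])
  by_contra hx
  have hquot : f x / ((‖x - x₀‖ : ℝ) : EReal) ≤ 0 :=
    EReal.div_nonpos_of_nonpos_of_nonneg hfx (EReal.coe_nonneg.mpr (norm_nonneg _))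
  exact (sphInf_le_div_norm_sub hx₀ hx).trans hquot |>.not_gt hpos

theorem sphInf_le_ErL {f : X → EReal} {x₀ : X} (hx₀ : f x₀ = 0)
    (hS : {x : X | f x ≤ 0} = {x₀}) : sphInf f x₀ ≤ ErL f x₀ := by
  rw [ErL, hS]
  refine le_liminf_of_le (by isBoundedDefault) ?_
  filter_upwards [mem_inf_of_right (mem_principal_self _)] with x (hx : 0 < f x)
  have hne : x ≠ x₀ := by
    rintro rfl
    exact hx.ne' hx₀
  rw [infDist_singleton, dist_eq_norm]
  exact sphInf_le_div_norm_sub hx₀ hne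

theorem stmt3_general (f : X → EReal)
    (xb : X) (hxb : f xb = 0) (hpos : 0 < sphInf f xb) :
    {x : X | f x ≤ 0} = {xb} ∧ sphInf f xb ≤ ErL f xb :=
  have hS := setOf_nonpos_eq_singleton_of_sphInf_pos hxb hpos
  ⟨hS, sphInf_le_ErL hxb hS⟩

/-- if inf_{‖h‖=1} d⁺f(xb,h) > 0 then S_f = {xb} and Er(f,xb) ≥ this inf. -/
theorem stmt3 [CompleteSpace X] (f : X → EReal) (hconv : EConvexOn f)
    (hproper : EProper f) (hlsc : LowerSemicontinuous f)
    (xb : X) (hxb : f xb = 0) (hpos : 0 < sphInf f xb) :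
    {x : X | f x ≤ 0} = {xb} ∧ sphInf f xb ≤ ErL f xb :=
  stmt3_general f xb hxb hpos
end

section
/- Let X be a Banach space, f : X → ℝ ∪ {+∞} proper lower semicontinuous convex, x̄ ∈ X with f(x̄) = 0, and suppose inf_{‖h‖=1} d⁺f(x̄, h) ≠ 0. Then Er(f, x̄) ≥ | inf_{‖h‖=1} d⁺f(x̄, h) |. -/
open Filter Topology Metric Set

variable {X : Type*} [NormedAddCommGroup X] [NormedSpace ℝ X]

/-- sphInf is below every difference quotient with unit direction and positive step -/
lemma sphInf_le_dquot (f : X → EReal) (x : X) {h : X} (hh : ‖h‖ = 1) {t : ℝ} (ht : 0 < t) :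
    sphInf f x ≤ dquot f x h t := by
  have h1 : sphInf f x ≤ dirDeriv f x h := iInf_le _ (⟨h, hh⟩ : {h : X // ‖h‖ = 1})
  exact h1.trans (iInf_le _ (⟨t, ht⟩ : {t : ℝ // 0 < t}))

/-- if inf_{‖h‖=1} d⁺f(xb,h) ≠ 0 then Er(f,xb) ≥ |inf_{‖h‖=1} d⁺f(xb,h)|. -/
theorem stmt5 [CompleteSpace X] (f : X → EReal) (hconv : EConvexOn f)
    (hproper : EProper f) (hlsc : LowerSemicontinuous f)
    (xb : X) (hxb : f xb = 0) (hne : sphInf f xb ≠ 0) :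
    max (sphInf f xb) (-(sphInf f xb)) ≤ ErL f xb := by
  set S : Set X := {y : X | f y ≤ 0} with hSdef
  have hSclosed : IsClosed S := hlsc.isClosed_preimage 0
  have hxbS : xb ∈ S := by simp [hSdef, hxb]
  rcases hne.lt_or_gt with hneg | hpos
  · -- case sphInf < 0
    have hnegpos : (0 : EReal) < -(sphInf f xb) := by
      simpa using EReal.neg_lt_neg_iff.2 hneg
    rw [max_eq_right (le_of_lt (hneg.trans hnegpos))]
    -- ErL ≥ 0
    have hErL0 : (0 : EReal) ≤ ErL f xb := by
      apply le_liminf_of_le (by isBoundedDefault)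
      refine Filter.eventually_inf_principal.2 (Filter.Eventually.of_forall fun x hx => ?_)
      exact EReal.div_nonneg (le_of_lt hx) (EReal.coe_nonneg.2 Metric.infDist_nonneg)
    -- key claim
    have key2 : ∀ c' : ℝ, 0 < c' → (c' : EReal) < -(sphInf f xb) → (c' : EReal) ≤ ErL f xb := by
      intro c' hc' hcs
      obtain ⟨c, hc1, hc2⟩ := EReal.exists_between_coe_real hcs
      have hc'c : c' < c := by exact_mod_cast hc1
      have hc0 : 0 < c := hc'.trans hc'c
      have hsc : sphInf f xb < ((-c : ℝ) : EReal) := by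
        have := EReal.neg_lt_neg_iff.2 hc2
        rwa [neg_neg, ← EReal.coe_neg] at this
      obtain ⟨⟨h, hh⟩, hd⟩ := iInf_lt_iff.1 hsc
      obtain ⟨⟨t0, ht0⟩, hq⟩ := iInf_lt_iff.1 hd
      simp only [dquot, hxb, sub_zero] at hq
      -- f (xb + t0 • h) is a real number ≤ -(c*t0)
      set z := xb + t0 • h with hz
      have hzt : f z ≠ ⊤ := by
        intro hT
        rw [hT, EReal.coe_mul_top_of_pos (inv_pos.2 ht0)] at hq
        exact not_top_lt hq
      lift f z to ℝ using ⟨hzt, hproper.2 z⟩ with r hr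
      have hrle : r ≤ -(c * t0) := by
        have : ((t0⁻¹ * r : ℝ) : EReal) < ((-c : ℝ) : EReal) := by
          rw [EReal.coe_mul]; exact hq
        have hlt : t0⁻¹ * r < -c := EReal.coe_lt_coe_iff.1 this
        have h5 : t0 * (t0⁻¹ * r) < t0 * (-c) := mul_lt_mul_of_pos_left hlt ht0
        rw [← mul_assoc, mul_inv_cancel₀ (ne_of_gt ht0), one_mul] at h5
        nlinarith
      have hzS : z ∈ S := by
        show f z ≤ 0
        rw [← hr]
        have hr0 : r ≤ 0 := hrle.trans (by nlinarith)
        exact_mod_cast hr0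
      have hSne : S.Nonempty := ⟨z, hzS⟩
      -- choose δ
      set δ : ℝ := t0 * (c - c') / c' with hδdef
      have hδ : 0 < δ := by
        apply div_pos (mul_pos ht0 (by linarith)) hc'
      apply le_liminf_of_le (by isBoundedDefault)
      refine Filter.eventually_inf_principal.2 ?_
      filter_upwards [Metric.ball_mem_nhds xb hδ] with x hxδ hxpos
      rw [Metric.mem_ball] at hxδ
      have hxpos : (0 : EReal) < f x := hxpos
      have hxS : x ∉ S := fun hmem => lt_irrefl _ (hxpos.trans_le hmem)
      have hD : 0 < infDist x S := (hSclosed.notMem_iff_infDist_pos hSne).1 hxS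
      rcases eq_or_ne (f x) ⊤ with hT | hT
      · rw [hT, EReal.top_div_of_pos_ne_top (by exact_mod_cast hD) (by simp)]
        exact le_top
      · lift f x to ℝ using ⟨hT, hproper.2 x⟩ with a ha
        have ha0 : 0 < a := EReal.coe_pos.1 hxpos
        have hct0 : 0 < c * t0 := mul_pos hc0 ht0
        set lam : ℝ := a / (a + c * t0) with hlam
        have hlam0 : 0 < lam := div_pos ha0 (by linarith)
        have hlam1 : lam < 1 := by
          rw [hlam, div_lt_one (by linarith)]; linarith
        have hlama : lam * (a + c * t0) = a := by
          rw [hlam, div_mul_cancel₀ _ (ne_of_gt (by linarith))]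
        -- the point y is in S
        have hyS : (1 - lam) • x + lam • z ∈ S := by
          have hy := hconv x z (1 - lam) lam (by linarith) hlam0.le (by ring)
          rw [← hr, ← ha] at hy
          refine le_trans hy ?_
          have hreal : (1 - lam) * a + lam * r ≤ 0 := by
            nlinarith [mul_le_mul_of_nonneg_left hrle hlam0.le]
          calc ((1 - lam : ℝ) : EReal) * (a : EReal) + (lam : EReal) * (r : EReal)
              = (((1 - lam) * a + lam * r : ℝ) : EReal) := by norm_cast
            _ ≤ (0 : EReal) := by exact_mod_cast hreal
        -- distance estimate
        have hdxz : dist xb z = t0 := by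
          show dist xb (xb + t0 • h) = t0
          have e : xb - (xb + t0 • h) = -(t0 • h) := by abel
          rw [dist_eq_norm, e, norm_neg, norm_smul, Real.norm_eq_abs, abs_of_pos ht0, hh,
            mul_one]
        have h2 : dist x ((1 - lam) • x + lam • z) = lam * dist x z := by
          rw [dist_eq_norm, dist_eq_norm]
          have hxy : x - ((1 - lam) • x + lam • z) = lam • (x - z) := by
            rw [smul_sub]; module
          rw [hxy, norm_smul, Real.norm_eq_abs, abs_of_pos hlam0]
        have hDle : infDist x S ≤ lam * (δ + t0) := by
          have h1 : infDist x S ≤ dist x ((1 - lam) • x + lam • z) :=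
            infDist_le_dist_of_mem hyS
          have h3 : dist x z ≤ dist x xb + dist xb z := dist_triangle x xb z
          have h5 : dist x z ≤ δ + t0 := by linarith
          rw [h2] at h1
          exact h1.trans (mul_le_mul_of_nonneg_left h5 hlam0.le)
        -- conclude
        have hfinal : c' ≤ a / infDist x S := by
          rw [le_div_iff₀ hD]
          have e1 : c' * (δ + t0) = c * t0 := by
            show c' * (t0 * (c - c') / c' + t0) = c * t0
            field_simp
            ring
          have e2 : c' * (lam * (δ + t0)) = lam * (c * t0) := by
            rw [show c' * (lam * (δ + t0)) = lam * (c' * (δ + t0)) by ring, e1]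
          have e3 : lam * (c * t0) ≤ a := by
            nlinarith [mul_pos hlam0 ha0]
          linarith [mul_le_mul_of_nonneg_left hDle hc'.le]
        calc ((c' : ℝ) : EReal) ≤ ((a / infDist x S : ℝ) : EReal) := EReal.coe_le_coe_iff.2 hfinal
          _ = (a : EReal) / ((infDist x S : ℝ) : EReal) := EReal.coe_div _ _
    -- assemble
    by_contra hcon
    push_neg at hcon
    obtain ⟨m, h1, h2⟩ := EReal.exists_between_coe_real hcon
    have hm : 0 < m := by exact_mod_cast hErL0.trans_lt h1
    exact absurd (key2 m hm h2) (not_le.2 h1)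
  · -- case sphInf > 0
    have hnegneg : -(sphInf f xb) < 0 := by
      simpa using EReal.neg_lt_neg_iff.2 hpos
    rw [max_eq_left (le_of_lt (hnegneg.trans hpos))]
    -- S = {xb}
    have hSeq : S = {xb} := by
      refine Set.eq_singleton_iff_unique_mem.2 ⟨hxbS, fun y hy => ?_⟩
      by_contra hne'
      have ht : (0 : ℝ) < ‖y - xb‖ := by
        rw [norm_pos_iff, sub_ne_zero]; exact hne'
      have hh : ‖(‖y - xb‖)⁻¹ • (y - xb)‖ = 1 := by
        rw [norm_smul, norm_inv, norm_norm, inv_mul_cancel₀ (ne_of_gt ht)]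
      have hkey := sphInf_le_dquot f xb hh ht
      have heq : xb + ‖y - xb‖ • ((‖y - xb‖)⁻¹ • (y - xb)) = y := by
        rw [smul_smul, mul_inv_cancel₀ (ne_of_gt ht), one_smul]; abel
      rw [dquot, heq, hxb, sub_zero] at hkey
      have hle0 : sphInf f xb ≤ 0 :=
        hkey.trans (mul_nonpos_of_nonneg_of_nonpos
          (EReal.coe_nonneg.2 (inv_nonneg.2 ht.le)) hy)
      exact lt_irrefl _ (hpos.trans_le hle0)
    apply le_liminf_of_le (by isBoundedDefault)
    refine Filter.eventually_inf_principal.2 (Filter.Eventually.of_forall fun x hx => ?_)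
    have hx : (0 : EReal) < f x := hx
    have hxne : x ≠ xb := by
      intro hEq; rw [hEq, hxb] at hx; exact lt_irrefl _ hx
    have ht : (0 : ℝ) < ‖x - xb‖ := by
      rw [norm_pos_iff, sub_ne_zero]; exact hxne
    have hh : ‖(‖x - xb‖)⁻¹ • (x - xb)‖ = 1 := by
      rw [norm_smul, norm_inv, norm_norm, inv_mul_cancel₀ (ne_of_gt ht)]
    have hkey := sphInf_le_dquot f xb hh ht
    have heq : xb + ‖x - xb‖ • ((‖x - xb‖)⁻¹ • (x - xb)) = x := by
      rw [smul_smul, mul_inv_cancel₀ (ne_of_gt ht), one_smul]; abel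
    rw [dquot, heq, hxb, sub_zero] at hkey
    have hdist : infDist x S = ‖x - xb‖ := by
      rw [hSeq, infDist_singleton, dist_eq_norm]
    rw [hdist]
    calc sphInf f xb ≤ (((‖x - xb‖)⁻¹ : ℝ) : EReal) * f x := hkey
      _ = f x / ((‖x - xb‖ : ℝ) : EReal) := by
        rw [EReal.div_eq_inv_mul, ← EReal.coe_inv]
end

section
/- Let X be a Banach space, f : X → ℝ ∪ {+∞} proper lower semicontinuous convex, x̄ ∈ X with f(x̄) = 0, and set γ := inf_{‖h‖=1} d⁺f(x̄, h). If γ ≠ 0, then for any ε, c > 0 with ε + c < |γ|, every proper lower semicontinuous convex function g that is an ε-perturbation of f near x̄ and satisfies g(x̄) ≤ 0 has local error bound modulus Er(g, x̄) ≥ c. -/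
open Filter Topology Metric Set

variable {X : Type*} [NormedAddCommGroup X] [NormedSpace ℝ X]

/-- g is an ε-perturbation of f near x₀ :
limsup_{x→x₀} |(f(x)-g(x))-(f(x₀)-g(x₀))|/‖x-x₀‖ ≤ ε -/
noncomputable def PtbAt (f g : X → EReal) (x₀ : X) (ε : ℝ) : Prop :=
  Filter.limsup (fun x => ((‖x - x₀‖⁻¹ : ℝ) : EReal) *
      max ((f x - g x) - (f x₀ - g x₀)) ((g x - f x) - (g x₀ - f x₀))) (𝓝[≠] x₀)
    ≤ (ε : EReal)

/-- the sublevel set of an lsc function is closed, so `infDist` is positive off it. -/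
lemma infDist_pos_of_pos {g : X → EReal} (hglsc : LowerSemicontinuous g)
    {xb x : X} (hgxb : g xb ≤ 0) (hx : 0 < g x) :
    0 < Metric.infDist x {y : X | g y ≤ 0} := by
  have hS : IsClosed {y : X | g y ≤ 0} := hglsc.isClosed_preimage 0
  exact (hS.notMem_iff_infDist_pos ⟨xb, hgxb⟩).mp (fun hmem => hx.not_ge hmem)

/-- key convexity lemma: a slope bound between a point and a point of the sublevel set
gives a lower bound on the error-bound ratio. -/
lemma keyB {g : X → EReal} (hgconv : EConvexOn g) {c : ℝ} (hc : 0 < c)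
    {x z : X} {b : ℝ} (hb : b ≤ 0) (hgz : g z = (b : EReal)) (hgx : 0 < g x)
    (hd : 0 < Metric.infDist x {y : X | g y ≤ 0})
    (hslope : ∀ a : ℝ, g x = (a : EReal) → c * ‖x - z‖ ≤ a - b) :
    (c : EReal) ≤ g x / ((Metric.infDist x {y : X | g y ≤ 0} : ℝ) : EReal) := by
  set d := Metric.infDist x {y : X | g y ≤ 0} with hdd
  rcases eq_top_or_lt_top (g x) with htop | hlt
  · rw [htop, EReal.top_div_of_pos_ne_top (by exact_mod_cast hd) (EReal.coe_ne_top d)]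
    exact le_top
  · have hbot : g x ≠ ⊥ := fun h => by simp [h] at hgx
    set a := (g x).toReal with ha
    have hga : g x = (a : EReal) := (EReal.coe_toReal hlt.ne hbot).symm
    have hapos : 0 < a := by rw [hga] at hgx; exact_mod_cast hgx
    have hsl := hslope a hga
    have hab : 0 < a - b := by linarith
    set lam := a / (a - b) with hlam
    have hlam0 : 0 ≤ lam := le_of_lt (div_pos hapos hab)
    have hw : g (lam • z + (1 - lam) • x) ≤ 0 := by
      have hcv := hgconv z x lam (1 - lam) hlam0 (by rw [hlam, sub_nonneg, div_le_one hab]; linarith) (by ring)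
      rw [hgz, hga] at hcv
      refine hcv.trans ?_
      rw [← EReal.coe_mul, ← EReal.coe_mul, ← EReal.coe_add]
      have he : lam * b + (1 - lam) * a = a - lam * (a - b) := by ring
      have he2 : lam * (a - b) = a := by rw [hlam]; field_simp
      rw [he, he2, sub_self]
      exact le_of_eq EReal.coe_zero
    have hmem : lam • z + (1 - lam) • x ∈ {y : X | g y ≤ 0} := hw
    have hdle : d ≤ lam * ‖x - z‖ := by
      have h1 : d ≤ dist x (lam • z + (1 - lam) • x) := Metric.infDist_le_dist_of_mem hmem
      have h2 : x - (lam • z + (1 - lam) • x) = lam • (x - z) := by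
        rw [smul_sub]; module
      rw [dist_eq_norm, h2, norm_smul, Real.norm_eq_abs, abs_of_nonneg hlam0] at h1
      exact h1
    have hcd : c ≤ a / d := by
      rw [le_div_iff₀ hd]
      calc c * d ≤ c * (lam * ‖x - z‖) := mul_le_mul_of_nonneg_left hdle hc.le
        _ = lam * (c * ‖x - z‖) := by ring
        _ ≤ lam * (a - b) := mul_le_mul_of_nonneg_left hsl hlam0
        _ = a := by rw [hlam]; field_simp
    rw [hga, ← EReal.coe_div]
    exact_mod_cast hcd

/-- from the perturbation bound, an eventual bound on the numerator of the quotient. -/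
lemma pert_ev {f g : X → EReal} {xb : X} {ε : ℝ} (hptb : PtbAt f g xb ε)
    {ε₂ : ℝ} (hε₂ : ε < ε₂) :
    ∀ᶠ x in 𝓝[≠] xb, max ((f x - g x) - (f xb - g xb)) ((g x - f x) - (g xb - f xb))
      ≤ ((ε₂ * ‖x - xb‖ : ℝ) : EReal) := by
  have hptb' : Filter.limsup (fun x => ((‖x - xb‖⁻¹ : ℝ) : EReal) *
      max ((f x - g x) - (f xb - g xb)) ((g x - f x) - (g xb - f xb))) (𝓝[≠] xb)
      ≤ (ε : EReal) := hptb
  have h := Filter.eventually_lt_of_limsup_lt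
    (lt_of_le_of_lt hptb' (by exact_mod_cast hε₂ : (ε : EReal) < (ε₂ : EReal)))
  filter_upwards [h, self_mem_nhdsWithin] with x hx hne
  have hxne : x ≠ xb := hne
  have hr : (0:ℝ) < ‖x - xb‖ := norm_pos_iff.mpr (sub_ne_zero_of_ne hxne)
  set M := max ((f x - g x) - (f xb - g xb)) ((g x - f x) - (g xb - f xb)) with hM
  have hdiv : M / ((‖x - xb‖ : ℝ) : EReal) < (ε₂ : EReal) := by
    rw [EReal.div_eq_inv_mul, ← EReal.coe_inv]
    exact hx
  have hle := (EReal.div_le_iff_le_mul (b := ((‖x - xb‖ : ℝ) : EReal))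
    (by exact_mod_cast hr) (EReal.coe_ne_top _)).mp hdiv.le
  rw [← EReal.coe_mul, mul_comm] at hle
  exact hle

/-- stability of local error bounds under ε-perturbation when
γ := inf_{‖h‖=1} d⁺f(xb,h) ≠ 0 and ε + c < |γ|. -/
theorem stmt8 [CompleteSpace X] (f : X → EReal) (hconv : EConvexOn f)
    (hproper : EProper f) (hlsc : LowerSemicontinuous f)
    (xb : X) (hxb : f xb = 0) (hγ : sphInf f xb ≠ 0)
    (ε c : ℝ) (hε : 0 < ε) (hc : 0 < c)
    (hsmall : ((ε + c : ℝ) : EReal) < max (sphInf f xb) (-(sphInf f xb)))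
    (g : X → EReal) (hgconv : EConvexOn g) (hgproper : EProper g)
    (hglsc : LowerSemicontinuous g) (hptb : PtbAt f g xb ε) (hgxb : g xb ≤ 0) :
    (c : EReal) ≤ ErL g xb := by
  classical
  obtain ⟨-, hfbot⟩ := hproper
  obtain ⟨-, hgbot⟩ := hgproper
  have hgxbt : g xb ≠ ⊤ := by
    intro h
    rw [h, top_le_iff] at hgxb
    exact absurd hgxb.symm (by simp)
  set cb := (g xb).toReal with hcb
  have hgcb : g xb = (cb : EReal) := (EReal.coe_toReal hgxbt (hgbot xb)).symm
  have hcb0 : cb ≤ 0 := by rw [hgcb] at hgxb; exact_mod_cast hgxb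
  have hevpos : ∀ᶠ x in 𝓝 xb ⊓ 𝓟 {x : X | 0 < g x}, 0 < g x :=
    eventually_inf_principal.mpr (Eventually.of_forall fun x hx => hx)
  have hFle : 𝓝 xb ⊓ 𝓟 {x : X | 0 < g x} ≤ 𝓝[≠] xb := by
    refine inf_le_inf_left _ (principal_mono.mpr ?_)
    intro x hx
    simp only [Set.mem_compl_iff, Set.mem_singleton_iff]
    rintro rfl
    exact absurd hgxb hx.not_ge
  rw [ErL]
  refine Filter.le_liminf_of_le (by isBoundedDefault) ?_
  rcases lt_max_iff.mp hsmall with hpos | hneg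
  · -- Case A : ε + c < sphInf
    obtain ⟨m, hm1, hm2⟩ := EReal.exists_between_coe_real hpos
    have hm1' : ε + c < m := by exact_mod_cast hm1
    set ε₂ := m - c with hε₂def
    have hεε₂ : ε < ε₂ := by rw [hε₂def]; linarith
    have hev := pert_ev hptb hεε₂
    have hflow : ∀ x : X, x ≠ xb → (m : EReal) < ((‖x - xb‖⁻¹ : ℝ) : EReal) * f x := by
      intro x hxne
      have hr : (0:ℝ) < ‖x - xb‖ := norm_pos_iff.mpr (sub_ne_zero_of_ne hxne)
      set h := ‖x - xb‖⁻¹ • (x - xb) with hh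
      have hhn : ‖h‖ = 1 := by
        rw [hh, norm_smul, Real.norm_eq_abs, abs_of_pos (inv_pos.mpr hr), inv_mul_cancel₀ hr.ne']
      have h1 : (m : EReal) < dirDeriv f xb h :=
        lt_of_lt_of_le hm2 (iInf_le _ (⟨h, hhn⟩ : {h : X // ‖h‖ = 1}))
      have h2 := h1.trans_le (iInf_le _ (⟨‖x - xb‖, hr⟩ : {t : ℝ // 0 < t}))
      rw [dquot] at h2
      have hx : xb + ‖x - xb‖ • h = x := by
        rw [hh, smul_smul, mul_inv_cancel₀ hr.ne', one_smul]; abel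
      rwa [hx, hxb, sub_zero] at h2
    filter_upwards [hFle hev, hevpos] with x hx hgx
    have hxne : x ≠ xb := by
      rintro rfl; exact absurd hgxb hgx.not_ge
    have hr : (0:ℝ) < ‖x - xb‖ := norm_pos_iff.mpr (sub_ne_zero_of_ne hxne)
    refine keyB hgconv hc hcb0 hgcb hgx (infDist_pos_of_pos hglsc hgxb hgx) ?_
    intro a hga
    have hp := (le_max_left _ _).trans hx
    have h0cb : f xb - g xb = ((0 - cb : ℝ) : EReal) := by
      rw [hxb, hgcb, EReal.coe_sub, EReal.coe_zero]
    rw [hga, h0cb] at hp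
    have hfx : f x ≠ ⊤ := by
      intro htop
      rw [htop, EReal.top_sub_coe, EReal.top_sub_coe] at hp
      exact absurd hp (EReal.coe_lt_top _).not_ge
    set v := (f x).toReal with hv
    have hfv : f x = (v : EReal) := (EReal.coe_toReal hfx (hfbot x)).symm
    rw [hfv, ← EReal.coe_sub, ← EReal.coe_sub] at hp
    have hpr : (v - a) - (0 - cb) ≤ ε₂ * ‖x - xb‖ := by exact_mod_cast hp
    have hfl := hflow x hxne
    rw [hfv, ← EReal.coe_mul] at hfl
    have hfl' : m < ‖x - xb‖⁻¹ * v := by exact_mod_cast hfl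
    have hmv : m * ‖x - xb‖ < v := by
      have := (mul_lt_mul_of_pos_right hfl' hr)
      rwa [inv_mul_eq_div, div_mul_cancel₀ _ hr.ne'] at this
    rw [hε₂def] at hpr
    nlinarith [hr]
  · -- Case B : ε + c < - sphInf
    have hsph : sphInf f xb < ((-(ε + c) : ℝ) : EReal) := by
      rw [EReal.coe_neg]
      exact EReal.lt_neg_of_lt_neg hneg
    obtain ⟨⟨h, hh1⟩, hdh⟩ := iInf_lt_iff.mp (show sphInf f xb < _ from hsph)
    obtain ⟨⟨t, ht⟩, hdq⟩ := iInf_lt_iff.mp (show dirDeriv f xb h < _ from hdh)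
    rw [dquot, hxb, sub_zero] at hdq
    have hftne : f (xb + t • h) ≠ ⊤ := by
      intro htop
      rw [htop, EReal.coe_mul_top_of_pos (inv_pos.mpr ht)] at hdq
      exact absurd hdq (by simp)
    set v := (f (xb + t • h)).toReal with hvdef
    have hfv : f (xb + t • h) = (v : EReal) := (EReal.coe_toReal hftne (hfbot _)).symm
    rw [hfv, ← EReal.coe_mul] at hdq
    have hdq' : t⁻¹ * v < -(ε + c) := by exact_mod_cast hdq
    set m := -v / t with hmdef
    have hvlt : v < -(ε + c) * t := by
      have h2 := mul_lt_mul_of_pos_right hdq' ht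
      rwa [mul_comm t⁻¹ v, mul_assoc, inv_mul_cancel₀ ht.ne', mul_one] at h2
    have hm : ε + c < m := by
      rw [hmdef, lt_div_iff₀ ht]
      nlinarith
    have hvm : v = -(m * t) := by rw [hmdef]; field_simp
    set ε₂ := (ε + (m - c)) / 2 with hε₂def
    have hεε₂ : ε < ε₂ := by rw [hε₂def]; linarith
    have hε₂m : ε₂ < m - c := by rw [hε₂def]; linarith
    set c' := m - ε₂ with hc'def
    have hcc' : c < c' := by rw [hc'def]; linarith
    have hev := pert_ev hptb hεε₂
    rw [eventually_nhdsWithin_iff, Metric.eventually_nhds_iff] at hev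
    obtain ⟨δ, hδ, hevδ⟩ := hev
    set s := min t δ / 2 with hsdef
    have hs0 : 0 < s := by
      rw [hsdef]; have := lt_min ht hδ; linarith
    have hst : s ≤ t := by
      rw [hsdef]; have := min_le_left t δ; linarith
    have hsδ : s < δ := by
      rw [hsdef]; have := min_le_right t δ; linarith
    set z := xb + s • h with hzdef
    have hzsub : z - xb = s • h := by rw [hzdef]; abel
    have hzxb : dist z xb = s := by
      rw [dist_eq_norm, hzsub, norm_smul, Real.norm_eq_abs, abs_of_pos hs0, hh1, mul_one]
    have hzne : z ≠ xb := by
      intro hzz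
      rw [hzz] at hzxb
      simp only [dist_self] at hzxb
      exact hs0.ne hzxb
    -- convexity bound on f z
    have hfz : f z ≤ ((-(m * s) : ℝ) : EReal) := by
      have hcv := hconv xb (xb + t • h) (1 - s / t) (s / t)
        (by rw [sub_nonneg, div_le_one ht]; exact hst) (by positivity) (by ring)
      rw [hxb, hfv] at hcv
      have hpt : (1 - s / t) • xb + (s / t) • (xb + t • h) = z := by
        rw [hzdef, smul_add, smul_smul, div_mul_cancel₀ _ ht.ne']
        module
      rw [hpt] at hcv
      refine hcv.trans ?_
      rw [mul_zero, zero_add, ← EReal.coe_mul]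
      refine EReal.coe_le_coe_iff.mpr (le_of_eq ?_)
      rw [hvm]; field_simp
    -- perturbation bound at z
    have hpz := (le_max_right _ _).trans (hevδ (by rw [hzxb]; exact hsδ) hzne)
    have hzn : ‖z - xb‖ = s := by rw [← dist_eq_norm]; exact hzxb
    have hgf0 : g xb - f xb = ((cb - 0 : ℝ) : EReal) := by
      rw [hxb, hgcb, EReal.coe_sub, EReal.coe_zero]
    rw [hgf0, hzn] at hpz
    have hfzt : f z ≠ ⊤ := by
      intro hh
      rw [hh] at hfz
      exact absurd hfz (EReal.coe_lt_top _).not_ge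
    set w := (f z).toReal with hwdef
    have hfw : f z = (w : EReal) := (EReal.coe_toReal hfzt (hfbot z)).symm
    have hwle : w ≤ -(m * s) := by rw [hfw] at hfz; exact_mod_cast hfz
    have hgzt : g z ≠ ⊤ := by
      intro htop
      rw [htop, hfw, EReal.top_sub_coe, EReal.top_sub_coe] at hpz
      exact absurd hpz (EReal.coe_lt_top _).not_ge
    set bz := (g z).toReal with hbzdef
    have hgbz : g z = (bz : EReal) := (EReal.coe_toReal hgzt (hgbot z)).symm
    rw [hgbz, hfw, ← EReal.coe_sub, ← EReal.coe_sub] at hpz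
    have hpzr : (bz - w) - (cb - 0) ≤ ε₂ * s := by exact_mod_cast hpz
    have hbz : bz ≤ -(c' * s) := by rw [hc'def]; nlinarith
    have hbz0 : bz ≤ 0 := by nlinarith [mul_pos (hc.trans hcc') hs0]
    -- the eventual bound
    have hρ : 0 < s * (c' - c) / c := by
      apply div_pos _ hc
      exact mul_pos hs0 (by linarith)
    have hevsmall : ∀ᶠ x in 𝓝 xb, ‖x - xb‖ < s * (c' - c) / c := by
      filter_upwards [Metric.ball_mem_nhds xb hρ] with x hx
      rwa [Metric.mem_ball, dist_eq_norm] at hx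
    filter_upwards [(inf_le_left : 𝓝 xb ⊓ 𝓟 {x : X | 0 < g x} ≤ 𝓝 xb) hevsmall, hevpos]
      with x hxs hgx
    refine keyB hgconv hc hbz0 hgbz hgx (infDist_pos_of_pos hglsc hgxb hgx) ?_
    intro a hga
    have ha0 : 0 < a := by rw [hga] at hgx; exact_mod_cast hgx
    have hxz : ‖x - z‖ ≤ ‖x - xb‖ + s := by
      calc ‖x - z‖ = ‖(x - xb) + (xb - z)‖ := by rw [sub_add_sub_cancel]
        _ ≤ ‖x - xb‖ + ‖xb - z‖ := norm_add_le _ _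
        _ = ‖x - xb‖ + s := by rw [norm_sub_rev xb z, hzn]
    have hxs' : ‖x - xb‖ * c < s * (c' - c) := (lt_div_iff₀ hc).mp hxs
    have h1 : c * ‖x - z‖ ≤ c * ‖x - xb‖ + c * s := by
      have := mul_le_mul_of_nonneg_left hxz hc.le
      rwa [mul_add] at this
    linarith
end

section
/- Let X be a Banach space, f : X → ℝ ∪ {+∞} proper lower semicontinuous convex, and x̄ with f(x̄) = 0. Suppose inf_{‖h‖=1} d⁺f(x̄, h) = 0. Then for every ε > 0 and every c > 0 there exist u* ∈ X* with ‖u*‖ ≤ 1 such that the function g := f + ε⟨u*, · − x̄⟩ (which is an ε-perturbation of f near x̄, is proper l.s.c. convex, and satisfies g(x̄) = 0) has Er(g, x̄) ≤ 5ε; in particular the local error bound moduli of linear ε-perturbations of f at x̄ are not bounded below by any positive constant uniformly in ε. -/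
open Filter Topology Metric Set

variable {X : Type*} [NormedAddCommGroup X] [NormedSpace ℝ X]

/-- helper: distributing a nonneg real over an EReal sum with a real term -/
lemma mul_add_coe_aux (a : ℝ) (ha : 0 ≤ a) (x : EReal) (hx : x ≠ ⊥) (L : ℝ) :
    (a : EReal) * (x + (L : ℝ)) = (a : EReal) * x + ((a * L : ℝ) : EReal) := by
  rcases eq_or_lt_of_le ha with h0 | hpos
  · simp [← h0]
  · induction x using EReal.rec with
    | bot => exact absurd rfl hx
    | coe b =>
        rw [← EReal.coe_add, ← EReal.coe_mul, ← EReal.coe_mul, ← EReal.coe_add]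
        norm_cast; ring
    | top => rw [EReal.top_add_coe, EReal.coe_mul_top_of_pos hpos, EReal.top_add_coe]

set_option maxHeartbeats 1000000 in
/-- if inf_{‖h‖=1} d⁺f(xb,h) = 0, then for every ε>0 (and every c>0) there
is a linear ε-perturbation g = f + ε⟨u*,·-xb⟩ with g(xb)=0 and Er(g,xb) ≤ 5ε. -/
theorem stmt9 [CompleteSpace X] (f : X → EReal) (hconv : EConvexOn f)
    (hproper : EProper f) (hlsc : LowerSemicontinuous f)
    (xb : X) (hxb : f xb = 0) (hγ : sphInf f xb = 0)
    (ε c : ℝ) (hε : 0 < ε) (hc : 0 < c) :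
    ∃ u : X →L[ℝ] ℝ, ‖u‖ ≤ 1 ∧
      ∀ g : X → EReal, g = (fun x => f x + ((ε * u (x - xb) : ℝ) : EReal)) →
        EConvexOn g ∧ EProper g ∧ LowerSemicontinuous g ∧
          PtbAt f g xb ε ∧ g xb = 0 ∧ ErL g xb ≤ ((5 * ε : ℝ) : EReal) := by
  -- f is nonnegative everywhere
  have hf0 : ∀ x, (0 : EReal) ≤ f x := by
    intro x
    rcases eq_or_ne x xb with rfl | hne
    · rw [hxb]
    · have ht : (0:ℝ) < ‖x - xb‖ := by
        rw [norm_pos_iff]; exact sub_ne_zero_of_ne hne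
      set t : ℝ := ‖x - xb‖ with htdef
      set h' : X := t⁻¹ • (x - xb) with hh'def
      have hh' : ‖h'‖ = 1 := by
        rw [hh'def, norm_smul, norm_inv, Real.norm_eq_abs, abs_of_pos ht,
          inv_mul_cancel₀ (ne_of_gt ht)]
      have h1 : (0 : EReal) ≤ dirDeriv f xb h' := by
        rw [← hγ]; exact iInf_le _ (⟨h', hh'⟩ : {h : X // ‖h‖ = 1})
      have h2 : dirDeriv f xb h' ≤ dquot f xb h' t :=
        iInf_le _ (⟨t, ht⟩ : {t : ℝ // 0 < t})
      have hx : xb + t • h' = x := by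
        rw [hh'def, smul_smul, mul_inv_cancel₀ (ne_of_gt ht), one_smul]
        abel
      have h3 : (0 : EReal) ≤ ((t⁻¹ : ℝ) : EReal) * f x := by
        have := le_trans h1 h2
        rwa [dquot, hxb, sub_zero, hx] at this
      have h4 : (0 : EReal) ≤ ((t : ℝ) : EReal) * (((t⁻¹ : ℝ) : EReal) * f x) :=
        mul_nonneg (by exact_mod_cast le_of_lt ht) h3
      rwa [← mul_assoc, ← EReal.coe_mul, mul_inv_cancel₀ (ne_of_gt ht),
        EReal.coe_one, one_mul] at h4
  -- find a unit direction with small directional derivative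
  have h1 : sphInf f xb < ((ε : ℝ) : EReal) := by
    rw [hγ]; exact_mod_cast hε
  rw [sphInf, iInf_lt_iff] at h1
  obtain ⟨⟨h, hh⟩, hd⟩ := h1
  rw [dirDeriv, iInf_lt_iff] at hd
  obtain ⟨⟨t₀, ht₀⟩, hq⟩ := hd
  rw [dquot, hxb, sub_zero] at hq
  -- extract the real value ρ = f (xb + t₀ • h)
  have hrtop : f (xb + t₀ • h) ≠ ⊤ := by
    intro htop
    rw [htop, EReal.coe_mul_top_of_pos (by positivity)] at hq
    exact not_top_lt hq
  obtain ⟨ρ, hρeq⟩ : ∃ ρ : ℝ, f (xb + t₀ • h) = (ρ : EReal) :=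
    ⟨(f (xb + t₀ • h)).toReal, (EReal.coe_toReal hrtop (hproper.2 _)).symm⟩
  have hρ0 : 0 ≤ ρ := by
    have := hf0 (xb + t₀ • h); rw [hρeq] at this; exact_mod_cast this
  have hρlt : ρ < ε * t₀ := by
    rw [hρeq, ← EReal.coe_mul] at hq
    have hq' : t₀⁻¹ * ρ < ε := by exact_mod_cast hq
    calc ρ = t₀ * (t₀⁻¹ * ρ) := by field_simp
      _ < t₀ * ε := by exact (mul_lt_mul_iff_right₀ ht₀).mpr hq'
      _ = ε * t₀ := mul_comm _ _
  -- Hahn-Banach functional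
  have hhne : h ≠ 0 := by
    intro h0; rw [h0, norm_zero] at hh; norm_num at hh
  obtain ⟨u, hu1, huh⟩ := exists_dual_vector ℝ h (norm_ne_zero_iff.mpr hhne)
  rw [hh] at huh
  norm_num at huh
  refine ⟨u, le_of_eq hu1, ?_⟩
  intro g hg
  have hgval : ∀ x, g x = f x + ((ε * u (x - xb) : ℝ) : EReal) := by
    intro x; rw [hg]
  have hgxb : g xb = 0 := by
    rw [hgval, sub_self, map_zero, mul_zero, hxb, EReal.coe_zero, add_zero]
  refine ⟨?_, ?_, ?_, ?_, hgxb, ?_⟩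
  · -- EConvexOn g
    intro x y a b ha hb hab
    have hpt : a • x + b • y - xb = a • (x - xb) + b • (y - xb) := by
      have h2 : a • (x - xb) + b • (y - xb) = a • x + b • y - (a + b) • xb := by
        rw [smul_sub, smul_sub, add_smul]; abel
      rw [h2, hab, one_smul]
    have expand : ε * u (a • x + b • y - xb)
        = a * (ε * u (x - xb)) + b * (ε * u (y - xb)) := by
      rw [hpt, map_add, map_smul, map_smul, smul_eq_mul, smul_eq_mul]; ring
    rw [hgval, hgval, hgval]
    calc f (a • x + b • y) + ((ε * u (a • x + b • y - xb) : ℝ) : EReal)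
        ≤ ((a : EReal) * f x + (b : EReal) * f y)
            + (((a * (ε * u (x - xb)) + b * (ε * u (y - xb)) : ℝ)) : EReal) := by
          apply add_le_add (hconv x y a b ha hb hab)
          rw [expand]
      _ = ((a : EReal) * f x + ((a * (ε * u (x - xb)) : ℝ) : EReal))
            + ((b : EReal) * f y + ((b * (ε * u (y - xb)) : ℝ) : EReal)) := by
          rw [EReal.coe_add]; exact add_add_add_comm _ _ _ _
      _ = (a : EReal) * (f x + ((ε * u (x - xb) : ℝ) : EReal))
            + (b : EReal) * (f y + ((ε * u (y - xb) : ℝ) : EReal)) := by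
          rw [mul_add_coe_aux a ha _ (hproper.2 x), mul_add_coe_aux b hb _ (hproper.2 y)]
  · -- EProper g
    obtain ⟨x₀, hx₀⟩ := hproper.1
    constructor
    · refine ⟨x₀, ?_⟩
      rw [hgval]
      exact ne_of_lt (EReal.add_lt_top hx₀ (EReal.coe_ne_top _))
    · intro x
      rw [hgval]
      intro hbot
      rcases EReal.add_eq_bot_iff.mp hbot with h' | h'
      · exact hproper.2 x h'
      · exact EReal.coe_ne_bot _ h'
  · -- LowerSemicontinuous g
    rw [hg]
    apply hlsc.add'
    · exact (continuous_coe_real_ereal.comp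
        ((continuous_const.mul (u.continuous.comp
          (continuous_id.sub continuous_const))))).lowerSemicontinuous
    · intro x
      apply EReal.continuousAt_add
      · exact Or.inr (EReal.coe_ne_bot _)
      · exact Or.inr (EReal.coe_ne_top _)
  · -- PtbAt f g xb ε
    apply Filter.limsup_le_of_le (by isBoundedDefault)
    filter_upwards [self_mem_nhdsWithin] with x (hx : x ≠ xb)
    have hxx : (0:ℝ) < ‖x - xb‖ := by rw [norm_pos_iff]; exact sub_ne_zero_of_ne hx
    rw [hxb, hgxb]; simp only [sub_zero]; rw [hgval x]
    set cc : ℝ := ε * u (x - xb) with hcc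
    have hcabs : |cc| ≤ ε * ‖x - xb‖ := by
      rw [hcc, abs_mul, abs_of_pos hε]
      apply mul_le_mul_of_nonneg_left _ (le_of_lt hε)
      calc |u (x - xb)| = ‖u (x - xb)‖ := (Real.norm_eq_abs _).symm
        _ ≤ ‖u‖ * ‖x - xb‖ := u.le_opNorm _
        _ = ‖x - xb‖ := by rw [hu1, one_mul]
    rcases eq_or_ne (f x) ⊤ with htop | hne
    · rw [htop, EReal.top_add_coe]
      have hbb : (⊤ : EReal) - ⊤ = ⊥ := by
        rw [sub_eq_add_neg, EReal.neg_top, EReal.add_bot]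
      rw [hbb, max_self, EReal.coe_mul_bot_of_pos (by positivity)]
      exact bot_le
    · obtain ⟨a, ha⟩ : ∃ a : ℝ, f x = (a : EReal) :=
        ⟨(f x).toReal, (EReal.coe_toReal hne (hproper.2 x)).symm⟩
      rw [ha, ← EReal.coe_add, ← EReal.coe_sub, ← EReal.coe_sub]
      have h1 : a - (a + cc) = -cc := by ring
      have h2 : a + cc - a = cc := by ring
      rw [h1, h2]
      have hmax : max ((-cc : ℝ) : EReal) ((cc : ℝ) : EReal) = ((|cc| : ℝ) : EReal) := by
        rw [abs_eq_max_neg, max_comm]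
        exact (EReal.coe_strictMono.monotone.map_max).symm
      rw [hmax, ← EReal.coe_mul, EReal.coe_le_coe_iff]
      calc ‖x - xb‖⁻¹ * |cc| ≤ ‖x - xb‖⁻¹ * (ε * ‖x - xb‖) := by
            apply mul_le_mul_of_nonneg_left hcabs (by positivity)
        _ = ε := by field_simp
  · -- ErL g xb ≤ 5ε
    set S : Set X := {y : X | g y ≤ 0} with hS
    have hxbS : xb ∈ S := by simp only [hS, mem_setOf_eq, hgxb, le_refl]
    have key : ∀ s : ℝ, 0 < s → s ≤ t₀ → f (xb + s • h) ≤ ((s / t₀ * ρ : ℝ) : EReal) := by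
      intro s hs hst
      have ha : (0:ℝ) ≤ s / t₀ := by positivity
      have hb : (0:ℝ) ≤ 1 - s / t₀ := by
        have : s / t₀ ≤ 1 := (div_le_one ht₀).mpr hst
        linarith
      have hab : s / t₀ + (1 - s / t₀) = 1 := by ring
      have hpt : (s / t₀) • (xb + t₀ • h) + (1 - s / t₀) • xb = xb + s • h := by
        rw [smul_add, smul_smul]
        have h1 : s / t₀ * t₀ = s := by field_simp
        rw [h1]
        have h2 : (s / t₀) • xb + (1 - s / t₀) • xb = xb := by
          rw [← add_smul]; simp
        rw [add_right_comm, h2]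
      have := hconv (xb + t₀ • h) xb (s / t₀) (1 - s / t₀) ha hb hab
      rw [hpt, hρeq, hxb, mul_zero, add_zero, ← EReal.coe_mul] at this
      exact this
    have hus : ∀ s : ℝ, u ((xb + s • h) - xb) = s := by
      intro s
      rw [add_sub_cancel_left, map_smul, smul_eq_mul, huh, mul_one]
    have hglb : ∀ s : ℝ, ((ε * s : ℝ) : EReal) ≤ g (xb + s • h) := by
      intro s
      rw [hgval, hus]
      calc ((ε * s : ℝ) : EReal) = 0 + ((ε * s : ℝ) : EReal) := (zero_add _).symm
        _ ≤ f (xb + s • h) + ((ε * s : ℝ) : EReal) := add_le_add_left (hf0 _) _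
    have hgub : ∀ s : ℝ, 0 < s → s ≤ t₀ → g (xb + s • h) ≤ ((2 * ε * s : ℝ) : EReal) := by
      intro s hs hst
      rw [hgval, hus]
      have h1 : s / t₀ * ρ ≤ ε * s := by
        calc s / t₀ * ρ ≤ s / t₀ * (ε * t₀) :=
              mul_le_mul_of_nonneg_left (le_of_lt hρlt) (by positivity)
          _ = ε * s := by field_simp
      calc f (xb + s • h) + ((ε * s : ℝ) : EReal)
          ≤ ((s / t₀ * ρ : ℝ) : EReal) + ((ε * s : ℝ) : EReal) :=
            add_le_add_left (key s hs hst) _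
        _ = ((s / t₀ * ρ + ε * s : ℝ) : EReal) := (EReal.coe_add _ _).symm
        _ ≤ ((2 * ε * s : ℝ) : EReal) := by
            rw [EReal.coe_le_coe_iff]; linarith
    have hgpos : ∀ s : ℝ, 0 < s → (0:EReal) < g (xb + s • h) := by
      intro s hs
      refine lt_of_lt_of_le ?_ (hglb s)
      exact_mod_cast mul_pos hε hs
    have hdist : ∀ s : ℝ, 0 < s → s ≤ infDist (xb + s • h) S := by
      intro s hs
      by_contra hlt
      push_neg at hlt
      obtain ⟨y, hyS, hyd⟩ := (infDist_lt_iff ⟨xb, hxbS⟩).mp hlt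
      have hy0 : u (y - xb) ≤ 0 := by
        have hgy : g y ≤ 0 := hyS
        have h2 : ((ε * u (y - xb) : ℝ) : EReal) ≤ 0 := by
          calc ((ε * u (y - xb) : ℝ) : EReal) = 0 + _ := (zero_add _).symm
            _ ≤ f y + ((ε * u (y - xb) : ℝ) : EReal) := add_le_add_left (hf0 y) _
            _ = g y := (hgval y).symm
            _ ≤ 0 := hgy
        have h3 : ε * u (y - xb) ≤ 0 := by exact_mod_cast h2
        nlinarith
      have : s ≤ dist (xb + s • h) y := by
        calc s = u ((xb + s • h) - xb) := (hus s).symm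
          _ ≤ u ((xb + s • h) - xb) - u (y - xb) := by linarith
          _ = u ((xb + s • h) - y) := by rw [← map_sub]; congr 1; abel
          _ ≤ |u ((xb + s • h) - y)| := le_abs_self _
          _ = ‖u ((xb + s • h) - y)‖ := (Real.norm_eq_abs _).symm
          _ ≤ ‖u‖ * ‖(xb + s • h) - y‖ := u.le_opNorm _
          _ = dist (xb + s • h) y := by rw [hu1, one_mul, dist_eq_norm]
      linarith
    have hratio : ∀ s : ℝ, 0 < s → s ≤ t₀ →
        g (xb + s • h) / ((infDist (xb + s • h) S : ℝ) : EReal) ≤ ((2 * ε : ℝ) : EReal) := by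
      intro s hs hst
      have hd : 0 < infDist (xb + s • h) S := lt_of_lt_of_le hs (hdist s hs)
      rw [EReal.div_le_iff_le_mul (by exact_mod_cast hd) (EReal.coe_ne_top _)]
      calc g (xb + s • h) ≤ ((2 * ε * s : ℝ) : EReal) := hgub s hs hst
        _ ≤ ((infDist (xb + s • h) S * (2 * ε) : ℝ) : EReal) := by
            rw [EReal.coe_le_coe_iff]
            nlinarith [hdist s hs]
        _ = _ := EReal.coe_mul _ _
    set sq : ℕ → ℝ := fun n => t₀ / (n + 1) with hsq
    have hsqpos : ∀ n : ℕ, 0 < sq n := by intro n; positivity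
    have hsqle : ∀ n : ℕ, sq n ≤ t₀ := by
      intro n
      rw [hsq]
      apply div_le_self (le_of_lt ht₀)
      exact le_add_of_nonneg_left (Nat.cast_nonneg n)
    have hsq0 : Tendsto sq atTop (𝓝 0) := by
      have h1 : Tendsto (fun n : ℕ => ((n:ℝ) + 1)) atTop atTop :=
        tendsto_natCast_atTop_atTop.atTop_add tendsto_const_nhds
      exact Tendsto.div_atTop tendsto_const_nhds h1
    have hxt : Tendsto (fun n : ℕ => xb + sq n • h) atTop (𝓝 xb) := by
      have h1 : Tendsto (fun n : ℕ => sq n • h) atTop (𝓝 (0 : X)) := by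
        simpa using hsq0.smul_const h
      simpa using tendsto_const_nhds.add h1
    rw [ErL]
    have htend : Tendsto (fun n : ℕ => xb + sq n • h) atTop
        (𝓝 xb ⊓ Filter.principal {x : X | 0 < g x}) := by
      rw [← nhdsWithin]
      rw [tendsto_nhdsWithin_iff]
      exact ⟨hxt, Eventually.of_forall fun n => hgpos (sq n) (hsqpos n)⟩
    have hfreq : ∃ᶠ x in (𝓝 xb ⊓ Filter.principal {x : X | 0 < g x}),
        g x / ((infDist x S : ℝ) : EReal) ≤ ((2 * ε : ℝ) : EReal) :=
      htend.frequently (Frequently.of_forall fun n => hratio (sq n) (hsqpos n) (hsqle n))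
    have hfin : Filter.liminf (fun x => g x / ((infDist x S : ℝ) : EReal))
        (𝓝 xb ⊓ Filter.principal {x : X | 0 < g x}) ≤ ((2 * ε : ℝ) : EReal) :=
      Filter.liminf_le_of_frequently_le' hfreq
    exact le_trans hfin (EReal.coe_le_coe_iff.mpr (by linarith))
end

section
/- Let X be a Banach space, f : X → ℝ ∪ {+∞} proper l.s.c. convex with bdry(S_f) ⊆ f⁻¹(0), and suppose there is τ > 0 such that inf_{‖h‖=1} d⁺f(x̄, h) ≤ −τ for every x̄ ∈ bdry(S_f). Then the global error bound τ·d(x, S_f) ≤ [f(x)]₊ holds for all x ∈ X, i.e., Er(f) ≥ τ. -/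
open Filter Topology Metric Set

variable {X : Type*} [NormedAddCommGroup X] [NormedSpace ℝ X]

set_option linter.unusedSectionVars false
set_option maxHeartbeats 1000000

lemma SClosed (f : X → EReal) (hlsc : LowerSemicontinuous f) :
    IsClosed {y : X | f y ≤ 0} := by
  rw [← isOpen_compl_iff, isOpen_iff_mem_nhds]
  intro x hx
  simp only [mem_compl_iff, mem_setOf_eq, not_le] at hx
  filter_upwards [hlsc x 0 hx] with y hy
  simp only [mem_compl_iff, mem_setOf_eq, not_le]
  exact hy
lemma seg_le {f : X → EReal} (hconv : EConvexOn f) (u v : X) {s : ℝ}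
    (h0 : 0 ≤ s) (h1 : s ≤ 1) :
    f (u + s • (v - u)) ≤ ((1 - s : ℝ) : EReal) * f u + (s : EReal) * f v := by
  have h := hconv u v (1 - s) s (by linarith) h0 (by ring)
  have he : (1 - s) • u + s • v = u + s • (v - u) := by
    rw [smul_sub, sub_smul, one_smul]; abel
  rwa [he] at h

lemma descent_s10 {f : X → EReal} (hconv : EConvexOn f) (hproper : EProper f)
    {τ : ℝ} {w : X} (hw : f w = 0) (hsph : sphInf f w ≤ ((-τ : ℝ) : EReal))
    {ρ t₀ : ℝ} (hρ : ρ < τ) (ht₀ : 0 < t₀) :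
    ∃ (h : X) (t : ℝ), ‖h‖ = 1 ∧ 0 < t ∧ t ≤ t₀ ∧ f (w + t • h) ≤ ((-(ρ * t) : ℝ) : EReal) := by
  have hlt : sphInf f w < ((-ρ : ℝ) : EReal) := by
    refine lt_of_le_of_lt hsph ?_
    exact_mod_cast (by linarith : (-τ : ℝ) < -ρ)
  rw [sphInf, iInf_lt_iff] at hlt
  obtain ⟨⟨h, hh⟩, hlt⟩ := hlt
  rw [dirDeriv, iInf_lt_iff] at hlt
  obtain ⟨⟨t, ht⟩, hlt⟩ := hlt
  rw [dquot, hw, sub_zero] at hlt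
  -- f (w + t•h) must be a real number a with t⁻¹ * a < -ρ
  have hne : f (w + t • h) ≠ ⊥ := hproper.2 _
  have hnt : f (w + t • h) ≠ ⊤ := by
    intro htop
    rw [htop] at hlt
    rw [EReal.mul_top_of_pos (by exact_mod_cast inv_pos.2 ht : (0:EReal) < ((t⁻¹:ℝ):EReal))] at hlt
    exact (not_top_lt hlt)
  set a := (f (w + t • h)).toReal with ha
  have hfa : f (w + t • h) = (a : EReal) := (EReal.coe_toReal hnt hne).symm
  rw [hfa, ← EReal.coe_mul, EReal.coe_lt_coe_iff] at hlt
  have hlt' : a < -(ρ * t) := by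
    have h2 : t⁻¹ * a < -ρ := hlt
    have h3 := mul_lt_mul_of_pos_left h2 ht
    rw [← mul_assoc, mul_inv_cancel₀ (ne_of_gt ht), one_mul] at h3
    nlinarith
  -- shrink t to t' = min t t₀
  refine ⟨h, min t t₀, hh, lt_min ht ht₀, min_le_right _ _, ?_⟩
  set t' := min t t₀ with ht'
  have ht'pos : 0 < t' := lt_min ht ht₀
  have hb0 : 0 ≤ t' / t := by positivity
  have hb1 : t' / t ≤ 1 := by
    rw [div_le_one ht]; exact min_le_left _ _
  have hseg := seg_le hconv w (w + t • h) hb0 hb1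
  have he : w + (t' / t) • (w + t • h - w) = w + t' • h := by
    rw [add_sub_cancel_left, smul_smul, div_mul_cancel₀ _ (ne_of_gt ht)]
  rw [he, hw, hfa] at hseg
  calc f (w + t' • h) ≤ ((1 - t'/t : ℝ) : EReal) * 0 + ((t'/t : ℝ) : EReal) * (a : EReal) := hseg
    _ = (((t'/t) * a : ℝ) : EReal) := by rw [mul_zero, zero_add, EReal.coe_mul]
    _ ≤ ((-(ρ * t') : ℝ) : EReal) := by
        rw [EReal.coe_le_coe_iff]
        have : (t'/t) * a ≤ (t'/t) * (-(ρ * t)) := by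
          apply mul_le_mul_of_nonneg_left (le_of_lt hlt') hb0
        calc (t'/t) * a ≤ (t'/t) * (-(ρ * t)) := this
          _ = -(ρ * t') := by field_simp
lemma crossing {f : X → EReal} (hconv : EConvexOn f) (hproper : EProper f)
    (hlsc : LowerSemicontinuous f)
    {x u : X} {m mz : ℝ} (hfx : f x = (m : EReal)) (hm : 0 < m)
    (hfu : f u ≤ (mz : EReal)) (hmz : mz < 0) :
    ∃ s : ℝ, 0 < s ∧ s ≤ m / (m - mz) ∧
      x + s • (u - x) ∈ frontier {y : X | f y ≤ 0} := by
  set S : Set X := {y : X | f y ≤ 0} with hS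
  have hux : u ≠ x := by
    intro h; rw [h, hfx] at hfu
    exact absurd (EReal.coe_le_coe_iff.1 hfu) (by linarith)
  have hnux : 0 < ‖u - x‖ := by
    rw [norm_pos_iff]; exact sub_ne_zero.2 hux
  set A : Set ℝ := {s : ℝ | s ∈ Icc (0:ℝ) 1 ∧ f (x + s • (u - x)) ≤ 0} with hA
  have h1A : (1:ℝ) ∈ A := by
    constructor
    · exact ⟨zero_le_one, le_refl 1⟩
    · show f (x + (1:ℝ) • (u - x)) ≤ 0
      rw [one_smul, add_sub_cancel]
      exact le_trans hfu (by exact_mod_cast le_of_lt hmz)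
  have hAne : A.Nonempty := ⟨1, h1A⟩
  have hAbdd : BddBelow A := ⟨0, fun s hs => hs.1.1⟩
  set σ := sInf A with hσ
  have hσ0 : 0 ≤ σ := le_csInf hAne (fun s hs => hs.1.1)
  have hσ1 : σ ≤ 1 := csInf_le hAbdd h1A
  -- σ > 0 via lower semicontinuity at x
  have hσpos : 0 < σ := by
    have hev : ∀ᶠ y in 𝓝 x, (0:EReal) < f y := hlsc x 0 (by show f x > 0; rw [hfx]; exact_mod_cast hm)
    rw [Metric.eventually_nhds_iff] at hev
    obtain ⟨δ, hδ, hball⟩ := hev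
    have : ∀ s ∈ A, δ / ‖u - x‖ ≤ s := by
      intro s hs
      by_contra hcon
      push_neg at hcon
      have hsd : dist (x + s • (u - x)) x < δ := by
        rw [dist_eq_norm, add_sub_cancel_left, norm_smul, Real.norm_eq_abs,
          abs_of_nonneg hs.1.1]
        calc s * ‖u - x‖ < (δ / ‖u - x‖) * ‖u - x‖ := by
              exact mul_lt_mul_of_pos_right hcon hnux
          _ = δ := div_mul_cancel₀ _ (ne_of_gt hnux)
      exact absurd hs.2 (not_le.2 (hball hsd))
    exact lt_of_lt_of_le (by positivity) (le_csInf hAne this)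
  -- the linear bound : slin ∈ A
  have hmmz : 0 < m - mz := by linarith
  set slin := m / (m - mz) with hslin
  have hslin0 : 0 ≤ slin := le_of_lt (by positivity)
  have hslin1 : slin ≤ 1 := by
    rw [div_le_one hmmz]; linarith
  have hslinA : slin ∈ A := by
    refine ⟨⟨hslin0, hslin1⟩, ?_⟩
    have h := seg_le hconv x u hslin0 hslin1
    rw [hfx] at h
    have hfune : f u ≠ ⊥ := hproper.2 u
    have hfunt : f u ≠ ⊤ := by
      intro h'; rw [h'] at hfu; exact absurd hfu (by simp)
    set b := (f u).toReal with hb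
    have hfub : f u = (b : EReal) := (EReal.coe_toReal hfunt hfune).symm
    have hbmz : b ≤ mz := by rw [hfub] at hfu; exact_mod_cast hfu
    rw [hfub] at h
    calc f (x + slin • (u - x)) ≤ ((1 - slin : ℝ) : EReal) * (m:EReal) + (slin:EReal) * (b:EReal) := h
      _ = (((1 - slin) * m + slin * b : ℝ) : EReal) := by
          rw [← EReal.coe_mul, ← EReal.coe_mul, ← EReal.coe_add]
      _ ≤ ((0:ℝ) : EReal) := by
          rw [EReal.coe_le_coe_iff]
          have h1 : slin * b ≤ slin * mz := mul_le_mul_of_nonneg_left hbmz hslin0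
          have h2 : (1 - slin) * m + slin * mz = 0 := by
            field_simp [hslin]
            have e : slin * (m - mz) = m := by rw [hslin]; exact div_mul_cancel₀ _ (ne_of_gt hmmz)
            linear_combination (-1 : ℝ) * e
          linarith
      _ = (0 : EReal) := by norm_num
  have hσlin : σ ≤ slin := csInf_le hAbdd hslinA
  refine ⟨σ, hσpos, hσlin, ?_⟩
  -- membership in frontier
  have hSclosed : IsClosed S := by
    rw [← isOpen_compl_iff, isOpen_iff_mem_nhds]
    intro z hz
    simp only [mem_compl_iff, hS, mem_setOf_eq, not_le] at hz
    filter_upwards [hlsc z 0 hz] with y hy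
    simp only [mem_compl_iff, hS, mem_setOf_eq, not_le]
    exact hy
  rw [frontier_eq_closure_inter_closure]
  constructor
  · -- in closure S (= S)
    have hmem : x + σ • (u - x) ∈ closure S := by
      rw [Metric.mem_closure_iff]
      intro ε hε
      obtain ⟨s, hsA, hs⟩ := exists_lt_of_csInf_lt hAne
        (show sInf A < σ + ε / ‖u - x‖ by
          have hp : 0 < ε / ‖u - x‖ := by positivity
          rw [← hσ]; linarith)
      refine ⟨x + s • (u - x), hsA.2, ?_⟩
      rw [dist_eq_norm]
      have : x + σ • (u - x) - (x + s • (u - x)) = (σ - s) • (u - x) := by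
        module
      rw [this, norm_smul, Real.norm_eq_abs]
      have hsσ : σ ≤ s := csInf_le hAbdd hsA
      rw [abs_of_nonpos (by linarith)]
      have : s - σ < ε / ‖u - x‖ := by linarith
      calc -(σ - s) * ‖u - x‖ = (s - σ) * ‖u - x‖ := by ring_nf
        _ < (ε / ‖u - x‖) * ‖u - x‖ := mul_lt_mul_of_pos_right this hnux
        _ = ε := div_mul_cancel₀ _ (ne_of_gt hnux)
    exact hmem
  · -- in closure Sᶜ
    rw [Metric.mem_closure_iff]
    intro ε hε
    set ε' := min (σ / 2) (ε / (2 * ‖u - x‖)) with hε'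
    have hε'pos : 0 < ε' := lt_min (by linarith) (by positivity)
    set s := σ - ε' with hs
    have hs0 : 0 ≤ s := by
      have : ε' ≤ σ / 2 := min_le_left _ _
      simp only [hs]; linarith
    have hsσ : s < σ := by simp only [hs]; linarith
    have hs1 : s ≤ 1 := by linarith
    refine ⟨x + s • (u - x), ?_, ?_⟩
    · simp only [mem_compl_iff, hS, mem_setOf_eq, not_le]
      by_contra hcon
      push_neg at hcon
      have : s ∈ A := ⟨⟨hs0, hs1⟩, hcon⟩
      exact absurd (csInf_le hAbdd this) (not_le.2 hsσ)
    · rw [dist_eq_norm]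
      have heq : x + σ • (u - x) - (x + s • (u - x)) = (σ - s) • (u - x) := by
        module
      rw [heq, norm_smul, Real.norm_eq_abs, abs_of_nonneg (by linarith)]
      have h1 : σ - s = ε' := by simp [hs]
      rw [h1]
      have h2 : ε' ≤ ε / (2 * ‖u - x‖) := min_le_right _ _
      calc ε' * ‖u - x‖ ≤ (ε / (2 * ‖u - x‖)) * ‖u - x‖ :=
            mul_le_mul_of_nonneg_right h2 (le_of_lt hnux)
        _ = ε / 2 := by field_simp
        _ < ε := by linarith

noncomputable def TT (f : X → EReal) (r : ℝ) (w : X) : Set ℝ :=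
  {t : ℝ | t ∈ Set.Ioc (0:ℝ) 1 ∧ ∃ h : X, ‖h‖ = 1 ∧ f (w + t • h) ≤ ((-(r * t) : ℝ) : EReal)}

lemma seq_exists {α : Sort*} (g : α → α) (w0 : α) :
    ∃ W : ℕ → α, W 0 = w0 ∧ ∀ n, W (n+1) = g (W n) :=
  ⟨fun n => Nat.rec w0 (fun _ p => g p) n, rfl, fun _ => rfl⟩

lemma main_bound [CompleteSpace X] {f : X → EReal} (hconv : EConvexOn f)
    (hproper : EProper f) (hlsc : LowerSemicontinuous f)
    (hbdry : frontier {x : X | f x ≤ 0} ⊆ {x : X | f x = 0})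
    (hbne : (frontier {x : X | f x ≤ 0}).Nonempty)
    {τ : ℝ} (hτ : 0 < τ)
    (hder : ∀ xb ∈ frontier {x : X | f x ≤ 0}, sphInf f xb ≤ ((-τ : ℝ) : EReal))
    {x : X} {m : ℝ} (hfx : f x = (m : EReal)) (hm : 0 < m)
    {r : ℝ} (hr : 0 < r) (hrτ : r < τ) :
    r * Metric.infDist x {y : X | f y ≤ 0} ≤ m := by
  by_contra hcon
  push_neg at hcon
  set S : Set X := {y : X | f y ≤ 0} with hSdef
  set d : ℝ := Metric.infDist x S with hddef
  have hFf : ∀ w ∈ frontier S, f w = 0 := fun w hw => hbdry hw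
  have hd : m / r < d := by rw [div_lt_iff₀ hr]; nlinarith
  have hd0 : 0 < d := lt_of_le_of_lt (by positivity) hd
  have hSclosed : IsClosed S := SClosed f hlsc
  -- one step of the iteration
  have step : ∀ w : X, ∃ (w' : X) (tc : ℝ), w ∈ frontier S →
      (w' ∈ frontier S ∧ 0 < tc ∧ tc ≤ 1 ∧ sSup (TT f r w) ≤ 2 * tc ∧
       ‖x - w'‖ ≤ (‖x - w‖ + tc) * (m / (m + r * tc)) ∧
       ‖w' - w‖ ≤ ‖x - w‖ - ‖x - w'‖ + 2 * tc) := by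
    intro w
    by_cases hw : w ∈ frontier S
    · have hfw : f w = 0 := hFf w hw
      obtain ⟨h0, t0, hh0, ht00, ht01, hdes0⟩ :=
        descent_s10 hconv hproper hfw (hder w hw) hrτ (one_pos)
      have ht0TT : t0 ∈ TT f r w := ⟨⟨ht00, ht01⟩, h0, hh0, hdes0⟩
      have hTTne : (TT f r w).Nonempty := ⟨t0, ht0TT⟩
      have hTTbdd : BddAbove (TT f r w) := ⟨1, fun s hs => hs.1.2⟩
      have hTpos : 0 < sSup (TT f r w) := lt_of_lt_of_le ht00 (le_csSup hTTbdd ht0TT)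
      obtain ⟨tc, htcTT, htchalf⟩ := exists_lt_of_lt_csSup hTTne (half_lt_self hTpos)
      obtain ⟨⟨htc0, htc1⟩, hc, hhc, hdesc⟩ := htcTT
      set u := w + tc • hc with hu
      have hmz : -(r * tc) < 0 := by nlinarith
      obtain ⟨s, hs0, hslin, hsF⟩ := crossing hconv hproper hlsc hfx hm hdesc hmz
      rw [sub_neg_eq_add] at hslin
      have hmrt : 0 < m + r * tc := by positivity
      have hs1 : s ≤ 1 := le_trans hslin (by rw [div_le_one hmrt]; nlinarith)
      set w' := x + s • (u - x) with hw'
      have hxw' : ‖x - w'‖ = s * ‖u - x‖ := by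
        have he : x - w' = (-s) • (u - x) := by rw [hw']; module
        rw [he, norm_smul, Real.norm_eq_abs, abs_neg, abs_of_nonneg (le_of_lt hs0)]
      have huxb : ‖u - x‖ ≤ ‖x - w‖ + tc := by
        have he : u - x = (w - x) + tc • hc := by rw [hu]; module
        calc ‖u - x‖ ≤ ‖w - x‖ + ‖tc • hc‖ := by rw [he]; exact norm_add_le _ _
          _ = ‖x - w‖ + tc := by
              rw [norm_sub_rev, norm_smul, Real.norm_eq_abs, abs_of_nonneg (le_of_lt htc0), hhc,
                mul_one]
      refine ⟨w', tc, fun _ => ⟨hsF, htc0, htc1, by linarith, ?_, ?_⟩⟩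
      · rw [hxw', mul_comm (‖x - w‖ + tc)]
        exact mul_le_mul hslin huxb (norm_nonneg _) (le_of_lt (by positivity))
      · have hw'u : ‖w' - u‖ = (1 - s) * ‖u - x‖ := by
          have he : w' - u = (1 - s) • (x - u) := by rw [hw', hu]; module
          rw [he, norm_smul, Real.norm_eq_abs, abs_of_nonneg (by linarith), norm_sub_rev]
        have huw : ‖u - w‖ = tc := by
          have he : u - w = tc • hc := by rw [hu]; module
          rw [he, norm_smul, Real.norm_eq_abs, abs_of_nonneg (le_of_lt htc0), hhc, mul_one]
        calc ‖w' - w‖ ≤ ‖w' - u‖ + ‖u - w‖ := norm_sub_le_norm_sub_add_norm_sub _ _ _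
          _ = (1 - s) * ‖u - x‖ + tc := by rw [hw'u, huw]
          _ = ‖u - x‖ - s * ‖u - x‖ + tc := by ring
          _ ≤ (‖x - w‖ + tc) - ‖x - w'‖ + tc := by
              rw [hxw']; linarith
          _ = ‖x - w‖ - ‖x - w'‖ + 2 * tc := by ring
    · exact ⟨x, 1, fun h => absurd h hw⟩
  choose g gt hstep using step
  obtain ⟨w0, hw0⟩ := hbne
  obtain ⟨W, hW0, hWs⟩ := seq_exists g w0
  have hWF : ∀ n, W n ∈ frontier S := by
    intro n
    induction n with
    | zero => rw [hW0]; exact hw0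
    | succ n ih => rw [hWs n]; exact (hstep (W n) ih).1
  have hprop : ∀ n, 0 < gt (W n) ∧ gt (W n) ≤ 1 ∧ sSup (TT f r (W n)) ≤ 2 * gt (W n) ∧
      ‖x - W (n+1)‖ ≤ (‖x - W n‖ + gt (W n)) * (m / (m + r * gt (W n))) ∧
      ‖W (n+1) - W n‖ ≤ ‖x - W n‖ - ‖x - W (n+1)‖ + 2 * gt (W n) := by
    intro n
    have h := hstep (W n) (hWF n)
    rw [← hWs n] at h
    exact ⟨h.2.1, h.2.2.1, h.2.2.2.1, h.2.2.2.2.1, h.2.2.2.2.2⟩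
  have hDd : ∀ n, d ≤ ‖x - W n‖ := by
    intro n
    have hWS : W n ∈ S := hSclosed.frontier_subset (hWF n)
    calc d ≤ dist x (W n) := Metric.infDist_le_dist_of_mem hWS
      _ = ‖x - W n‖ := dist_eq_norm _ _
  set c : ℝ := (d * r - m) / (m + r) with hcdef
  have hdrm : 0 < d * r - m := by
    have := (div_lt_iff₀ hr).1 hd
    nlinarith
  have hc : 0 < c := div_pos hdrm (by positivity)
  have hdec : ∀ n, c * gt (W n) ≤ ‖x - W n‖ - ‖x - W (n+1)‖ := by
    intro n
    obtain ⟨ht0, ht1, _, hDb, _⟩ := hprop n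
    have h1 : 0 < m + r * gt (W n) := by positivity
    have h2 : (0:ℝ) < m + r := by positivity
    have h3 : ‖x - W (n+1)‖ * (m + r * gt (W n)) ≤ (‖x - W n‖ + gt (W n)) * m := by
      calc ‖x - W (n+1)‖ * (m + r * gt (W n))
          ≤ ((‖x - W n‖ + gt (W n)) * (m / (m + r * gt (W n)))) * (m + r * gt (W n)) :=
            mul_le_mul_of_nonneg_right hDb (le_of_lt h1)
        _ = (‖x - W n‖ + gt (W n)) * m := by field_simp
    have h4 : d ≤ ‖x - W n‖ := hDd n
    have key1 : gt (W n) * (d * r - m) ≤ (‖x - W n‖ - ‖x - W (n+1)‖) * (m + r * gt (W n)) := by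
      nlinarith [mul_nonneg (mul_pos hr ht0).le (sub_nonneg.2 h4)]
    have key2 : 0 < ‖x - W n‖ - ‖x - W (n+1)‖ := by
      nlinarith [mul_pos ht0 hdrm]
    have key3 : gt (W n) * (d * r - m) ≤ (‖x - W n‖ - ‖x - W (n+1)‖) * (m + r) := by
      nlinarith [mul_le_mul_of_nonneg_left (show r * gt (W n) ≤ r by nlinarith) key2.le]
    rw [hcdef, div_mul_eq_mul_div, div_le_iff₀ h2]
    nlinarith
  have hmono : ∀ n, ‖x - W (n+1)‖ ≤ ‖x - W n‖ := by
    intro n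
    have := hdec n
    nlinarith [mul_pos hc (hprop n).1]
  have hsum1 : Summable (fun n => ‖x - W n‖ - ‖x - W (n+1)‖) := by
    apply summable_of_sum_range_le (c := ‖x - W 0‖)
    · intro n; linarith [hmono n]
    · intro n
      rw [Finset.sum_range_sub' (fun n => ‖x - W n‖) n]
      linarith [norm_nonneg (x - W n)]
  have hsumt : Summable (fun n => gt (W n)) := by
    apply Summable.of_nonneg_of_le (fun n => le_of_lt (hprop n).1)
      (f := fun n => (‖x - W n‖ - ‖x - W (n+1)‖) / c)
    · intro n
      rw [le_div_iff₀ hc, mul_comm]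
      exact hdec n
    · exact hsum1.div_const c
  have htend : Tendsto (fun n => gt (W n)) atTop (𝓝 0) := hsumt.tendsto_atTop_zero
  have hsumdist : Summable (fun n => dist (W n) (W (n+1))) := by
    apply Summable.of_nonneg_of_le (fun n => dist_nonneg)
      (f := fun n => (‖x - W n‖ - ‖x - W (n+1)‖) + 2 * gt (W n))
    · intro n
      rw [dist_eq_norm, norm_sub_rev]
      exact (hprop n).2.2.2.2
    · exact hsum1.add (hsumt.mul_left 2)
  have hcauchy : CauchySeq W := cauchySeq_of_summable_dist hsumdist
  obtain ⟨wl, hwl⟩ := cauchySeq_tendsto_of_complete hcauchy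
  have hwlF : wl ∈ frontier S := isClosed_frontier.mem_of_tendsto hwl
    (Filter.Eventually.of_forall hWF)
  -- final contradiction via descent at the limit point
  set ρ' : ℝ := (r + τ) / 2 with hρ'def
  have hρ'r : r < ρ' := by rw [hρ'def]; linarith
  have hρ'τ : ρ' < τ := by rw [hρ'def]; linarith
  obtain ⟨hs, ts, hhs, hts0, htshalf, hdess⟩ :=
    descent_s10 hconv hproper (hFf wl hwlF) (hder wl hwlF) hρ'τ (t₀ := 1/2) (by norm_num)
  set δb : ℝ := min (ts / 2) (ts * (ρ' - r) / r) with hδbdef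
  have hδb : 0 < δb := lt_min (by linarith) (div_pos (mul_pos hts0 (by linarith)) hr)
  have hev1 : ∀ᶠ n in atTop, dist (W n) wl < δb := by
    have := hwl.eventually (Metric.ball_mem_nhds wl hδb)
    filter_upwards [this] with n hn
    exact hn
  have hev2 : ∀ᶠ n in atTop, gt (W n) < ts / 4 := by
    have := htend.eventually (Iio_mem_nhds (show (0:ℝ) < ts / 4 by linarith))
    filter_upwards [this] with n hn
    exact hn
  obtain ⟨N, hN1, hN2⟩ := (hev1.and hev2).exists
  set v : X := wl + ts • hs - W N with hvdef
  set t' : ℝ := ‖v‖ with ht'def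
  have hvts : ‖v - ts • hs‖ = dist (W N) wl := by
    have he : v - ts • hs = wl - W N := by rw [hvdef]; module
    rw [he, dist_eq_norm, norm_sub_rev]
  have habs : |t' - ts| ≤ dist (W N) wl := by
    rw [← hvts]
    have h1 : ‖ts • hs‖ = ts := by
      rw [norm_smul, Real.norm_eq_abs, abs_of_nonneg (le_of_lt hts0), hhs, mul_one]
    calc |t' - ts| = |‖v‖ - ‖ts • hs‖| := by rw [ht'def, h1]
      _ ≤ ‖v - ts • hs‖ := abs_norm_sub_norm_le _ _
  have hδmin1 : dist (W N) wl < ts / 2 := lt_of_lt_of_le hN1 (min_le_left _ _)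
  have hδmin2 : dist (W N) wl < ts * (ρ' - r) / r := lt_of_lt_of_le hN1 (min_le_right _ _)
  have ht'lb : ts / 2 < t' := by
    have := abs_le.1 habs
    linarith [this.1]
  have ht'ub : t' ≤ ts + dist (W N) wl := by
    have := abs_le.1 habs
    linarith [this.2]
  have ht'0 : 0 < t' := by linarith
  have ht'1 : t' ≤ 1 := by linarith
  set h' : X := t'⁻¹ • v with hh'def
  have hh'1 : ‖h'‖ = 1 := by
    rw [hh'def, norm_smul, Real.norm_eq_abs, abs_of_nonneg (le_of_lt (inv_pos.2 ht'0)),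
      ← ht'def, inv_mul_cancel₀ (ne_of_gt ht'0)]
  have heq : W N + t' • h' = wl + ts • hs := by
    rw [hh'def, smul_smul, mul_inv_cancel₀ (ne_of_gt ht'0), one_smul, hvdef]
    abel
  have hfb : f (W N + t' • h') ≤ ((-(r * t') : ℝ) : EReal) := by
    rw [heq]
    refine le_trans hdess ?_
    rw [EReal.coe_le_coe_iff]
    have : r * t' ≤ ρ' * ts := by
      have h5 : r * dist (W N) wl ≤ ts * (ρ' - r) := by
        have := le_of_lt hδmin2
        calc r * dist (W N) wl ≤ r * (ts * (ρ' - r) / r) := by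
              exact mul_le_mul_of_nonneg_left this (le_of_lt hr)
          _ = ts * (ρ' - r) := by field_simp
      nlinarith [ht'ub]
    linarith
  have ht'TT : t' ∈ TT f r (W N) := ⟨⟨ht'0, ht'1⟩, h', hh'1, hfb⟩
  have hTTbddN : BddAbove (TT f r (W N)) := ⟨1, fun s hs => hs.1.2⟩
  have hfin : t' ≤ 2 * gt (W N) :=
    le_trans (le_csSup hTTbddN ht'TT) (hprop N).2.2.1
  linarith

theorem stmt10 [CompleteSpace X] (f : X → EReal) (hconv : EConvexOn f)
    (hproper : EProper f) (hlsc : LowerSemicontinuous f)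
    (hbdry : frontier {x : X | f x ≤ 0} ⊆ {x : X | f x = 0})
    (hbne : (frontier {x : X | f x ≤ 0}).Nonempty)
    (τ : ℝ) (hτ : 0 < τ)
    (hder : ∀ xb ∈ frontier {x : X | f x ≤ 0}, sphInf f xb ≤ ((-τ : ℝ) : EReal)) :
    (∀ x : X, ((τ * Metric.infDist x {y : X | f y ≤ 0} : ℝ) : EReal) ≤ max (f x) 0) ∧
      (τ : EReal) ≤ ErG f := by
  have hSclosed : IsClosed {y : X | f y ≤ 0} := SClosed f hlsc
  have hSne : ({y : X | f y ≤ 0} : Set X).Nonempty := by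
    obtain ⟨w0, hw0⟩ := hbne
    exact ⟨w0, hSclosed.frontier_subset hw0⟩
  have main : ∀ x : X, 0 < f x → f x ≠ ⊤ →
      τ * Metric.infDist x {y : X | f y ≤ 0} ≤ (f x).toReal := by
    intro x hpos hnt
    have hfx : f x = ((f x).toReal : EReal) := (EReal.coe_toReal hnt (hproper.2 x)).symm
    have hm : 0 < (f x).toReal := by
      have := hpos
      rw [hfx] at this
      exact_mod_cast this
    by_contra hcon
    push_neg at hcon
    have hdd : 0 < Metric.infDist x {y : X | f y ≤ 0} := by
      by_contra hd0
      push_neg at hd0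
      nlinarith [hcon]
    have hmd : (f x).toReal / Metric.infDist x {y : X | f y ≤ 0} < τ := by
      rw [div_lt_iff₀ hdd]; nlinarith
    set r : ℝ := ((f x).toReal / Metric.infDist x {y : X | f y ≤ 0} + τ) / 2 with hrdef
    have hr0 : 0 < r := by
      have : 0 < (f x).toReal / Metric.infDist x {y : X | f y ≤ 0} := by positivity
      rw [hrdef]; linarith
    have hrτ : r < τ := by rw [hrdef]; linarith
    have hb := main_bound hconv hproper hlsc hbdry hbne hτ hder hfx hm hr0 hrτ
    have : (f x).toReal / Metric.infDist x {y : X | f y ≤ 0} < r := by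
      rw [hrdef]; linarith
    rw [div_lt_iff₀ hdd] at this
    nlinarith
  constructor
  · intro x
    rcases le_or_gt (f x) 0 with hle | hpos
    · have hx : x ∈ {y : X | f y ≤ 0} := hle
      rw [Metric.infDist_zero_of_mem hx, mul_zero]
      exact le_trans (by norm_num) (le_max_right (f x) 0)
    · by_cases hnt : f x = ⊤
      · rw [hnt]
        exact le_trans le_top (le_max_left _ _)
      · have h := main x hpos hnt
        have hfx : f x = ((f x).toReal : EReal) := (EReal.coe_toReal hnt (hproper.2 x)).symm
        calc ((τ * Metric.infDist x {y : X | f y ≤ 0} : ℝ) : EReal)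
            ≤ (((f x).toReal : ℝ) : EReal) := EReal.coe_le_coe_iff.2 h
          _ = f x := hfx.symm
          _ ≤ max (f x) 0 := le_max_left _ _
  · rw [ErG]
    apply le_iInf
    rintro ⟨x, hpos⟩
    have hxS : x ∉ {y : X | f y ≤ 0} := fun hx => absurd (hx : f x ≤ 0) (not_le.2 hpos)
    have hdd : 0 < Metric.infDist x {y : X | f y ≤ 0} :=
      (hSclosed.notMem_iff_infDist_pos hSne).1 hxS
    show (τ : EReal) ≤ f x / ((Metric.infDist x {y : X | f y ≤ 0} : ℝ) : EReal)
    by_cases hnt : f x = ⊤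
    · rw [hnt, EReal.top_div_of_pos_ne_top (by exact_mod_cast hdd) (by simp)]
      exact le_top
    · have h := main x hpos hnt
      have hfx : f x = ((f x).toReal : EReal) := (EReal.coe_toReal hnt (hproper.2 x)).symm
      rw [hfx, ← EReal.coe_div, EReal.coe_le_coe_iff]
      rw [le_div_iff₀ hdd]
      linarith
end

section
/- For f(x) := eˣ − 1 on ℝ: S_f = (−∞, 0], bdry(S_f) = {0}, |inf_{|h|=1} d⁺f(0, h)| = 1, and yet for every ε > 0 the perturbed function g_ε(x) := eˣ − 1 − εx satisfies Er(g_ε) ≤ 2ε and Lip(f − g_ε) = ε. Hence condition (3.9) alone (boundary directional-derivative bound) is not sufficient for stability of global error bounds under Lipschitz-small perturbations. -/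
open Filter Topology Metric Set

variable {X : Type*} [NormedAddCommGroup X] [NormedSpace ℝ X]

/-- L is a Lipschitz bound for the difference f - g -/
def ediffLip (f g : X → EReal) (L : ℝ) : Prop :=
  ∀ u v : X, (f u - g u) - (f v - g v) ≤ ((L * ‖u - v‖ : ℝ) : EReal)

set_option maxHeartbeats 1000000 in
/-- for f(x) = eˣ - 1, condition (3.9) holds yet global error bounds are
unstable: g_ε(x) = eˣ - 1 - εx has Er(g_ε) ≤ 2ε and Lip(f - g_ε) = ε. -/
theorem stmt14 (f : ℝ → EReal) (hf : f = fun x => ((Real.exp x - 1 : ℝ) : EReal)) :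
    {x : ℝ | f x ≤ 0} = Set.Iic 0 ∧
    frontier {x : ℝ | f x ≤ 0} = {0} ∧
    max (sphInf f 0) (-(sphInf f 0)) = 1 ∧
    ∀ ε : ℝ, 0 < ε →
      ∀ g : ℝ → EReal, g = (fun x => ((Real.exp x - 1 - ε * x : ℝ) : EReal)) →
        ediffLip f g ε ∧ (∀ L : ℝ, 0 ≤ L → ediffLip f g L → ε ≤ L) ∧
          ErG g ≤ ((2 * ε : ℝ) : EReal) := by
  subst hf
  have hset : {x : ℝ | (fun x => ((Real.exp x - 1 : ℝ) : EReal)) x ≤ 0} = Set.Iic 0 := by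
    ext x
    simp only [Set.mem_setOf_eq, Set.mem_Iic]
    rw [show ((0:EReal)) = ((0:ℝ):EReal) from rfl, EReal.coe_le_coe_iff]
    constructor
    · intro h
      by_contra hx
      push_neg at hx
      have : (1:ℝ) < Real.exp x := by
        calc (1:ℝ) < 1 + x := by linarith
        _ ≤ Real.exp x := by linarith [Real.add_one_le_exp x]
      linarith
    · intro h
      have : Real.exp x ≤ 1 := Real.exp_le_one_iff.mpr h
      linarith
  refine ⟨hset, ?_, ?_, ?_⟩
  · rw [hset, frontier_Iic]
  · -- sphInf = -1
    have hs : sphInf (fun x : ℝ => ((Real.exp x - 1 : ℝ) : EReal)) 0 = ((-1 : ℝ) : EReal) := by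
      apply le_antisymm
      · -- ≤ -1 : take h = -1
        have h1 : sphInf (fun x : ℝ => ((Real.exp x - 1 : ℝ) : EReal)) 0 ≤
            dirDeriv (fun x : ℝ => ((Real.exp x - 1 : ℝ) : EReal)) 0 (-1) :=
          iInf_le (fun h : {h : ℝ // ‖h‖ = 1} =>
            dirDeriv (fun x : ℝ => ((Real.exp x - 1 : ℝ) : EReal)) 0 h.1)
            (⟨(-1 : ℝ), by simp⟩ : {h : ℝ // ‖h‖ = 1})
        refine h1.trans ?_
        -- dirDeriv ≤ -1 via limit as t → 0+
        have hten : Tendsto (fun t : ℝ => t⁻¹ * (Real.exp (-t) - 1)) (𝓝[>] (0:ℝ)) (𝓝 (-1)) := by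
          have h : HasDerivAt (fun x : ℝ => Real.exp (-x)) (-1) 0 := by
            have := (Real.hasDerivAt_exp (-0)).comp 0 (hasDerivAt_neg (0:ℝ))
            simpa [Function.comp_def] using this
          have := hasDerivAt_iff_tendsto_slope.mp h
          refine (this.mono_left (nhdsWithin_mono _ ?_)).congr' ?_
          · intro x hx; exact ne_of_gt hx
          · filter_upwards [self_mem_nhdsWithin] with t ht
            simp [slope, Real.exp_zero, div_eq_inv_mul]
        have htenE : Tendsto (fun t : ℝ => ((t⁻¹ * (Real.exp (-t) - 1) : ℝ) : EReal))
            (𝓝[>] (0:ℝ)) (𝓝 ((-1 : ℝ) : EReal)) :=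
          (continuous_coe_real_ereal.tendsto _).comp hten
        refine ge_of_tendsto htenE ?_
        filter_upwards [self_mem_nhdsWithin] with t ht
        have hle : dirDeriv (fun x : ℝ => ((Real.exp x - 1 : ℝ) : EReal)) 0 (-1)
            ≤ dquot (fun x : ℝ => ((Real.exp x - 1 : ℝ) : EReal)) 0 (-1) t :=
          iInf_le (fun s : {s : ℝ // 0 < s} =>
            dquot (fun x : ℝ => ((Real.exp x - 1 : ℝ) : EReal)) 0 (-1) s.1)
            (⟨t, ht⟩ : {s : ℝ // 0 < s})
        refine hle.trans_eq ?_
        simp only [dquot, zero_add, smul_eq_mul, Real.exp_zero, mul_neg_one]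
        rw [← EReal.coe_sub, ← EReal.coe_mul, EReal.coe_eq_coe_iff]
        ring
      · -- -1 ≤ sphInf
        refine le_iInf fun h => le_iInf fun t => ?_
        obtain ⟨h, hh⟩ := h
        obtain ⟨t, ht⟩ := t
        show ((-1:ℝ) : EReal) ≤ dquot _ 0 h t
        have : dquot (fun x : ℝ => ((Real.exp x - 1 : ℝ) : EReal)) 0 h t
            = ((t⁻¹ * (Real.exp (t * h) - 1) : ℝ) : EReal) := by
          simp only [dquot, zero_add, smul_eq_mul, Real.exp_zero]
          rw [← EReal.coe_sub, ← EReal.coe_mul, EReal.coe_eq_coe_iff]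
          ring
        rw [this, EReal.coe_le_coe_iff]
        have habs : |h| = 1 := by simpa [Real.norm_eq_abs] using hh
        have h1 : t * h ≥ -t := by
          have : -(t * |h|) ≤ t * h := by
            have := neg_abs_le (t * h)
            rwa [abs_mul, abs_of_pos ht] at this
          rwa [habs, mul_one] at this
        have h2 : -t ≤ Real.exp (t * h) - 1 := by linarith [Real.add_one_le_exp (t * h)]
        calc (-1 : ℝ) = t⁻¹ * (-t) := by field_simp
          _ ≤ t⁻¹ * (Real.exp (t * h) - 1) := by
              apply mul_le_mul_of_nonneg_left h2 (le_of_lt (inv_pos.mpr ht))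
    rw [hs, ← EReal.coe_neg]
    norm_num
    have : ((-1:ℝ):EReal) ≤ ((1:ℝ):EReal) := EReal.coe_le_coe_iff.mpr (by norm_num)
    simpa using this
  · intro ε hε g hg
    subst hg
    have hεne : ε ≠ 0 := ne_of_gt hε
    have h1 : ∀ w : ℝ, ((Real.exp w - 1 : ℝ) : EReal) -
        ((Real.exp w - 1 - ε * w : ℝ) : EReal) = ((ε * w : ℝ) : EReal) := by
      intro w; rw [← EReal.coe_sub, EReal.coe_eq_coe_iff]; ring
    refine ⟨?_, ?_, ?_⟩
    · intro u v
      simp only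
      rw [h1 u, h1 v, ← EReal.coe_sub, EReal.coe_le_coe_iff]
      have he : ε * u - ε * v = ε * (u - v) := by ring
      rw [he, Real.norm_eq_abs]
      exact mul_le_mul_of_nonneg_left (le_abs_self _) hε.le
    · intro L hL hLip
      have hthis := hLip 1 0
      simp only at hthis
      rw [h1 1, h1 0, ← EReal.coe_sub, EReal.coe_le_coe_iff] at hthis
      rw [Real.norm_eq_abs] at hthis
      norm_num at hthis
      linarith
    · set x₀ : ℝ := -3/ε with hx₀def
      have hεx₀ : ε * x₀ = -3 := by rw [hx₀def]; field_simp
      have hx₀neg : x₀ < 0 := by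
        rw [hx₀def]
        have : (0:ℝ) < 3/ε := by positivity
        linarith [this, show (-3/ε:ℝ) = -(3/ε) by ring]
      have hx₀pos : (0:EReal) < ((Real.exp x₀ - 1 - ε * x₀ : ℝ):EReal) := by
        rw [show (0:EReal) = ((0:ℝ):EReal) from rfl, EReal.coe_lt_coe_iff]
        have := Real.exp_pos x₀
        rw [hεx₀] at *
        linarith
      set S : Set ℝ := {y : ℝ | ((Real.exp y - 1 - ε * y : ℝ):EReal) ≤ 0} with hSdef
      have hS0 : (0:ℝ) ∈ S := by
        simp only [hSdef, Set.mem_setOf_eq]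
        rw [show (0:EReal) = ((0:ℝ):EReal) from rfl, EReal.coe_le_coe_iff]
        simp [Real.exp_zero]
      have hd : 2/ε ≤ Metric.infDist x₀ S := by
        by_contra hlt
        push_neg at hlt
        obtain ⟨y, hyS, hdy⟩ := (Metric.infDist_lt_iff ⟨0, hS0⟩).1 hlt
        have hy : Real.exp y - 1 - ε * y ≤ 0 := by
          have := hyS
          simp only [hSdef, Set.mem_setOf_eq] at this
          rwa [show (0:EReal) = ((0:ℝ):EReal) from rfl, EReal.coe_le_coe_iff] at this
        have hey := Real.exp_pos y
        have hy2 : -1 < ε * y := by linarith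
        have hdy' : dist x₀ y < 2/ε := hdy
        rw [Real.dist_eq] at hdy'
        have hge : y - x₀ ≤ |x₀ - y| := by
          rw [abs_sub_comm]; exact le_abs_self _
        have hyx : y - x₀ < 2/ε := lt_of_le_of_lt hge hdy'
        -- y > -1/ε and x₀ = -3/ε ⇒ y - x₀ > 2/ε, contradiction
        have hylb : -1/ε < y := by
          rw [div_lt_iff₀ hε] -- -1/ε < y ↔ -1 < y * ε
          linarith [hy2, mul_comm ε y]
        have : 2/ε < y - x₀ := by
          rw [hx₀def]
          have : 2/ε = -1/ε - (-3/ε) := by ring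
          linarith [hylb, this]
        linarith
      have hdpos : 0 < Metric.infDist x₀ S := lt_of_lt_of_le (by positivity) hd
      have hbound : ((Real.exp x₀ - 1 - ε * x₀ : ℝ):EReal) /
          ((Metric.infDist x₀ S : ℝ) : EReal) ≤ ((2 * ε : ℝ) : EReal) := by
        rw [← EReal.coe_div, EReal.coe_le_coe_iff, div_le_iff₀ hdpos]
        have hle1 : Real.exp x₀ ≤ 1 := Real.exp_le_one_iff.mpr hx₀neg.le
        have h4 : (4:ℝ) ≤ 2 * ε * Metric.infDist x₀ S := by
          have := mul_le_mul_of_nonneg_left hd (by positivity : (0:ℝ) ≤ 2*ε)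
          have heq : 2 * ε * (2/ε) = 4 := by field_simp; ring
          linarith
        rw [hεx₀]
        linarith
      unfold ErG
      have key := iInf_le (fun x : {x : ℝ //
          0 < (fun x : ℝ => ((Real.exp x - 1 - ε * x : ℝ):EReal)) x} =>
          (fun x : ℝ => ((Real.exp x - 1 - ε * x : ℝ):EReal)) x.1 /
          ((Metric.infDist x.1 {y : ℝ |
            (fun x : ℝ => ((Real.exp x - 1 - ε * x : ℝ):EReal)) y ≤ 0} : ℝ) : EReal))
        (⟨x₀, hx₀pos⟩ : {x : ℝ // 0 < (fun x : ℝ => ((Real.exp x - 1 - ε * x : ℝ):EReal)) x})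
      exact key.trans hbound
end

section
/- Let T be a compact metric space, X a Banach space, a* : T → X* and b : T → ℝ continuous, f(x) := max_{t∈T}(⟨a*(t), x⟩ − b(t)), J(x) := {t : ⟨a*(t),x⟩ − b(t) = f(x)}, and 𝒥 := {J(x) : f(x) = 0}. If there is τ > 0 such that |inf_{‖h‖=1} sup_{t∈J} ⟨a*(t), h⟩| ≥ τ for all J ∈ 𝒥, then the Hoffman constant σ(a*, b) := inf_{x∉S} f(x)/d(x, S) (where S is the solution set of the system ⟨a*(t),x⟩ ≤ b(t) for all t) satisfies σ(a*, b) ≥ τ. -/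
open Filter Topology Metric Set

variable {X : Type*} [NormedAddCommGroup X] [NormedSpace ℝ X]

/-- Ekeland-type variational lemma for the distance function on a closed set. -/
lemma ekeland_dist {X : Type*} [NormedAddCommGroup X] [CompleteSpace X]
    {Z : Set X} (hZ : IsClosed Z) {z' : X} (hz' : z' ∈ Z) (x : X) {δ : ℝ} (hδ : 0 < δ) :
    ∃ z₀ ∈ Z, ∀ z ∈ Z, ‖x - z₀‖ ≤ ‖x - z‖ + δ * ‖z - z₀‖ := by
  classical
  set A : X → Set X := fun v => {u | u ∈ Z ∧ ‖x - u‖ + δ * ‖u - v‖ ≤ ‖x - v‖} with hA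
  have hself : ∀ v ∈ Z, v ∈ A v := by
    intro v hv
    refine ⟨hv, by simp⟩
  have hstep : ∀ (n : ℕ) (v : X), v ∈ Z →
      ∃ u, u ∈ A v ∧ ∀ u' ∈ A v, ‖x - u‖ ≤ ‖x - u'‖ + (1/2)^n := by
    intro n v hv
    have hne : ((fun u => ‖x - u‖) '' A v).Nonempty := ⟨_, ⟨v, hself v hv, rfl⟩⟩
    obtain ⟨r, ⟨u, hu, rfl⟩, hr⟩ := Real.lt_sInf_add_pos hne (ε := (1/2)^n) (by positivity)
    refine ⟨u, hu, fun u' hu' => ?_⟩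
    have hb : BddBelow ((fun u => ‖x - u‖) '' A v) :=
      ⟨0, fun r ⟨w, _, hw⟩ => hw ▸ norm_nonneg _⟩
    have := csInf_le hb ⟨u', hu', rfl⟩
    linarith
  choose! step hstep1 hstep2 using hstep
  let seq : ℕ → X := fun n => Nat.rec z' (fun n prev => step n prev) n
  have hseq_succ : ∀ n, seq (n+1) = step n (seq n) := fun n => rfl
  have hseq0 : seq 0 = z' := rfl
  have hseqZ : ∀ n, seq n ∈ Z := by
    intro n
    induction n with
    | zero => exact hz'
    | succ n ih => rw [hseq_succ]; exact (hstep1 n (seq n) ih).1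
  have hkey : ∀ n, ‖x - seq (n+1)‖ + δ * ‖seq (n+1) - seq n‖ ≤ ‖x - seq n‖ := by
    intro n
    have := (hstep1 n (seq n) (hseqZ n)).2
    rwa [hseq_succ]
  have htel : ∀ n k, ‖x - seq (n+k)‖ + δ * ‖seq (n+k) - seq n‖ ≤ ‖x - seq n‖ := by
    intro n k
    induction k with
    | zero => simp
    | succ k ih =>
      have h1 := hkey (n+k)
      have h2 : ‖seq (n+k+1) - seq n‖ ≤ ‖seq (n+k+1) - seq (n+k)‖ + ‖seq (n+k) - seq n‖ :=
        norm_sub_le_norm_sub_add_norm_sub _ _ _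
      have h3 := mul_le_mul_of_nonneg_left h2 hδ.le
      have hrw : n + (k+1) = n + k + 1 := rfl
      rw [hrw]
      nlinarith
  have hsum : Summable fun n => dist (seq n) (seq (n+1)) := by
    apply summable_of_sum_range_le (c := ‖x - z'‖ / δ)
    · intro n; exact dist_nonneg
    · intro n
      have hts : ∀ m, δ * (∑ i ∈ Finset.range m, dist (seq i) (seq (i+1)))
          ≤ ‖x - seq 0‖ - ‖x - seq m‖ := by
        intro m
        induction m with
        | zero => simp
        | succ m ih =>
          have := hkey m
          rw [Finset.sum_range_succ, mul_add, dist_comm, dist_eq_norm]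
          linarith
      have h1 := hts n
      have h2 : (0:ℝ) ≤ ‖x - seq n‖ := norm_nonneg _
      rw [le_div_iff₀ hδ]
      rw [hseq0] at h1
      nlinarith
  obtain ⟨z₀, hlim⟩ := cauchySeq_tendsto_of_complete (cauchySeq_of_summable_dist hsum)
  have hz₀Z : z₀ ∈ Z := hZ.mem_of_tendsto hlim (Filter.Eventually.of_forall hseqZ)
  have hlimineq : ∀ n, ‖x - z₀‖ + δ * ‖z₀ - seq n‖ ≤ ‖x - seq n‖ := by
    intro n
    have hconv : Filter.Tendsto (fun k => ‖x - seq k‖ + δ * ‖seq k - seq n‖)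
        Filter.atTop (nhds (‖x - z₀‖ + δ * ‖z₀ - seq n‖)) := by
      have t1 : Filter.Tendsto (fun k => ‖x - seq k‖) Filter.atTop (nhds ‖x - z₀‖) :=
        (Filter.Tendsto.sub tendsto_const_nhds hlim).norm
      have t2 : Filter.Tendsto (fun k => ‖seq k - seq n‖) Filter.atTop (nhds ‖z₀ - seq n‖) :=
        (Filter.Tendsto.sub hlim tendsto_const_nhds).norm
      exact t1.add (t2.const_mul δ)
    refine le_of_tendsto hconv ?_
    rw [Filter.eventually_atTop]
    refine ⟨n, fun k hk => ?_⟩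
    obtain ⟨j, rfl⟩ := Nat.exists_eq_add_of_le hk
    exact htel n j
  refine ⟨z₀, hz₀Z, fun z hz => ?_⟩
  by_contra hcon
  push_neg at hcon
  have hzA : ∀ n, z ∈ A (seq n) := by
    intro n
    refine ⟨hz, ?_⟩
    have h1 := hlimineq n
    have h2 : ‖z - seq n‖ ≤ ‖z - z₀‖ + ‖z₀ - seq n‖ := norm_sub_le_norm_sub_add_norm_sub _ _ _
    have h3 := mul_le_mul_of_nonneg_left h2 hδ.le
    nlinarith
  have hup : ∀ n, ‖x - seq (n+1)‖ ≤ ‖x - z‖ + (1/2)^n := by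
    intro n
    have := hstep2 n (seq n) (hseqZ n) z (hzA n)
    rwa [hseq_succ]
  have hfin : ‖x - z₀‖ ≤ ‖x - z‖ := by
    by_contra hc
    push_neg at hc
    obtain ⟨n, hn⟩ := exists_pow_lt_of_lt_one (by linarith : (0:ℝ) < ‖x - z₀‖ - ‖x - z‖)
      (by norm_num : (1:ℝ)/2 < 1)
    have hu := hup n
    have hl := hlimineq (n+1)
    nlinarith [norm_nonneg (z₀ - seq (n+1)), mul_nonneg hδ.le (norm_nonneg (z₀ - seq (n+1)))]
  rcases eq_or_ne z z₀ with rfl | hne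
  · simp at hcon
  · have h4 : 0 < δ * ‖z - z₀‖ :=
      mul_pos hδ (norm_pos_iff.2 (sub_ne_zero.2 hne))
    linarith

set_option maxHeartbeats 2000000 in
/-- lower bound on the Hoffman constant of a semi-infinite linear system. -/
theorem stmt17 [CompleteSpace X] {T : Type*} [MetricSpace T] [CompactSpace T] [Nonempty T]
    (a : T → X →L[ℝ] ℝ) (b : T → ℝ) (ha : Continuous a) (hb : Continuous b)
    (f : X → ℝ) (hf : f = fun x => ⨆ t : T, (a t x - b t))
    (S : Set X) (hS : S = {x : X | ∀ t : T, a t x ≤ b t}) (hSne : S.Nonempty)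
    (τ : ℝ) (hτ : 0 < τ)
    (hcond : ∀ x : X, f x = 0 →
      τ ≤ |⨅ h : {h : X // ‖h‖ = 1},
            ⨆ t : {t : T // a t x - b t = f x}, a t.1 h.1|) :
    (τ : EReal) ≤
      ⨅ x : {x : X // x ∉ S},
        ((f x.1 : ℝ) : EReal) / ((Metric.infDist x.1 S : ℝ) : EReal) := by
  classical
  -- basic facts about f
  have hfx : ∀ x, f x = ⨆ t : T, (a t x - b t) := fun x => by rw [hf]
  have hcontt : ∀ x : X, Continuous fun t : T => a t x - b t := fun x =>
    (ha.clm_apply continuous_const).sub hb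
  obtain ⟨M, hM⟩ : ∃ M, ∀ t, ‖a t‖ ≤ M := by
    obtain ⟨M, hM⟩ := (isCompact_range (continuous_norm.comp ha)).bddAbove
    exact ⟨M, fun t => hM ⟨t, rfl⟩⟩
  have hM0 : 0 ≤ M := le_trans (norm_nonneg _) (hM Classical.ofNonempty)
  have hbddA : ∀ x : X, BddAbove (Set.range fun t : T => a t x - b t) := fun x =>
    (isCompact_range (hcontt x)).bddAbove
  have hle : ∀ (t : T) (x : X), a t x - b t ≤ f x := fun t x => by
    rw [hfx]; exact le_ciSup (hbddA x) t
  have hattain : ∀ x : X, ∃ t : T, f x = a t x - b t := by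
    intro x
    obtain ⟨t, -, hmax⟩ := isCompact_univ.exists_isMaxOn univ_nonempty (hcontt x).continuousOn
    refine ⟨t, le_antisymm ?_ (hle t x)⟩
    rw [hfx]
    exact ciSup_le fun t' => hmax (mem_univ t')
  have hkey_lin : ∀ (t : T) (u v : X), a t u - a t v ≤ M * ‖u - v‖ := by
    intro t u v
    have h1 : a t u - a t v = a t (u - v) := (map_sub (a t) u v).symm
    rw [h1]
    calc a t (u - v) ≤ |a t (u - v)| := le_abs_self _
      _ = ‖a t (u - v)‖ := rfl
      _ ≤ ‖a t‖ * ‖u - v‖ := (a t).le_opNorm _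
      _ ≤ M * ‖u - v‖ := mul_le_mul_of_nonneg_right (hM t) (norm_nonneg _)
  have hfub : ∀ u v : X, f u ≤ f v + M * ‖u - v‖ := by
    intro u v
    rw [hfx u]
    refine ciSup_le fun t => ?_
    have := hkey_lin t u v
    have h2 := hle t v
    linarith
  have hcontf : Continuous f := by
    have : LipschitzWith (Real.toNNReal M) f := by
      apply LipschitzWith.of_dist_le_mul
      intro u v
      rw [Real.coe_toNNReal M hM0, Real.dist_eq, dist_eq_norm, abs_sub_le_iff]
      constructor
      · have := hfub u v; linarith
      · have := hfub v u; rw [norm_sub_rev]; linarith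
    exact this.continuous
  have hmemS : ∀ x : X, x ∈ S ↔ f x ≤ 0 := by
    intro x
    rw [hS]
    constructor
    · intro h
      rw [hfx]
      exact ciSup_le fun t => sub_nonpos.2 (h t)
    · intro h t
      exact sub_nonpos.1 ((hle t x).trans h)
  have hSclosed : IsClosed S := by
    have : S = f ⁻¹' Set.Iic 0 := Set.ext fun x => by simpa using hmemS x
    rw [this]
    exact isClosed_Iic.preimage hcontf
  have hfposS : ∀ x, x ∉ S → 0 < f x := by
    intro x hx
    rw [hmemS] at hx
    linarith [not_le.1 hx]
  -- the key real inequality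
  have key : ∀ x, x ∉ S → τ * Metric.infDist x S ≤ f x := by
    intro x hx
    by_cases hXtriv : Nontrivial X
    swap
    · exfalso
      rw [not_nontrivial_iff_subsingleton] at hXtriv
      obtain ⟨s, hs⟩ := hSne
      exact hx (Subsingleton.elim x s ▸ hs)
    obtain ⟨e, he⟩ := exists_norm_eq X (zero_le_one (α := ℝ))
    haveI hsphne : Nonempty {h : X // ‖h‖ = 1} := ⟨⟨e, he⟩⟩
    set D : X → ℝ := fun z => ⨅ h : {h : X // ‖h‖ = 1},
        ⨆ t : {t : T // a t z - b t = f z}, a t.1 h.1 with hD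
    have hbnd : ∀ (t : T) (h : {h : X // ‖h‖ = 1}), |a t h.1| ≤ M := by
      intro t h
      calc |a t h.1| = ‖a t h.1‖ := rfl
        _ ≤ ‖a t‖ * ‖h.1‖ := (a t).le_opNorm _
        _ = ‖a t‖ := by rw [h.2, mul_one]
        _ ≤ M := hM t
    have hJne : ∀ z : X, Nonempty {t : T // a t z - b t = f z} := by
      intro z
      obtain ⟨t, ht⟩ := hattain z
      exact ⟨⟨t, ht.symm⟩⟩
    have hbddsup : ∀ (z : X) (h : {h : X // ‖h‖ = 1}),
        BddAbove (Set.range fun t : {t : T // a t z - b t = f z} => a t.1 h.1) := by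
      intro z h
      exact ⟨M, fun r ⟨t, ht⟩ => ht ▸ (le_abs_self _).trans (hbnd t.1 h)⟩
    have hsuplb : ∀ (z : X) (h : {h : X // ‖h‖ = 1}),
        -M ≤ ⨆ t : {t : T // a t z - b t = f z}, a t.1 h.1 := by
      intro z h
      haveI := hJne z
      obtain ⟨t⟩ := hJne z
      refine le_trans ?_ (le_ciSup (hbddsup z h) t)
      have := hbnd t.1 h
      rw [abs_le] at this
      linarith [this.1]
    have hbddD : ∀ z : X, BddBelow (Set.range fun h : {h : X // ‖h‖ = 1} =>
        ⨆ t : {t : T // a t z - b t = f z}, a t.1 h.1) := by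
      intro z
      exact ⟨-M, fun r ⟨h, hh⟩ => hh ▸ hsuplb z h⟩
    have hdich : ∀ z, f z = 0 → D z ≤ -τ ∨ τ ≤ D z := by
      intro z hz
      rcases le_abs.1 (hcond z hz) with h | h
      · exact Or.inr h
      · exact Or.inl (by linarith)
    by_cases hcaseA : ∃ z, f z = 0 ∧ τ ≤ D z
    · -- CASE A : sharp growth
      obtain ⟨z₀, hz₀, hDz₀⟩ := hcaseA
      have hxz : x ≠ z₀ := fun h => by
        have := hfposS x hx; rw [h, hz₀] at this; exact lt_irrefl 0 this
      have hq : (0:ℝ) < ‖x - z₀‖ := norm_pos_iff.2 (sub_ne_zero.2 hxz)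
      set u : X := ‖x - z₀‖⁻¹ • (x - z₀) with hu
      have hu1 : ‖u‖ = 1 := by
        rw [hu, norm_smul, Real.norm_eq_abs, abs_inv, abs_of_pos hq, inv_mul_cancel₀ hq.ne']
      have hgoal : ∀ ε, 0 < ε → (τ - ε) * ‖x - z₀‖ ≤ f x := by
        intro ε hε
        have h1 : τ - ε < D z₀ + ε - ε := by linarith
        have h2 : τ - ε < ⨆ t : {t : T // a t z₀ - b t = f z₀}, a t.1 u := by
          refine lt_of_lt_of_le (by linarith : τ - ε < D z₀) ?_
          exact ciInf_le (hbddD z₀) ⟨u, hu1⟩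
        haveI := hJne z₀
        obtain ⟨t, ht⟩ := exists_lt_of_lt_ciSup h2
        have htz : a t.1 z₀ - b t.1 = 0 := t.2.trans hz₀
        have hsm : a t.1 (x - z₀) = ‖x - z₀‖ * a t.1 u := by
          rw [hu, map_smul, smul_eq_mul]
          field_simp
        have h3 : a t.1 x - b t.1 = a t.1 (x - z₀) + (a t.1 z₀ - b t.1) := by
          rw [map_sub]; ring
        have h4 := hle t.1 x
        rw [h3, htz, hsm] at h4
        have h5 : (τ - ε) * ‖x - z₀‖ ≤ a t.1 u * ‖x - z₀‖ :=
          mul_le_mul_of_nonneg_right ht.le hq.le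
        have h6 : a t.1 u * ‖x - z₀‖ = ‖x - z₀‖ * a t.1 u := mul_comm _ _
        linarith
      have hfin : τ * ‖x - z₀‖ ≤ f x := by
        by_contra hcc
        push_neg at hcc
        have hε : 0 < (τ * ‖x - z₀‖ - f x) / (2 * ‖x - z₀‖) :=
          div_pos (by linarith) (by positivity)
        have := hgoal _ hε
        have hexp : (τ - (τ * ‖x - z₀‖ - f x) / (2 * ‖x - z₀‖)) * ‖x - z₀‖
            = τ * ‖x - z₀‖ - (τ * ‖x - z₀‖ - f x) / 2 := by
          field_simp
        rw [hexp] at this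
        linarith
      have hz₀S : z₀ ∈ S := (hmemS z₀).2 (le_of_eq hz₀)
      have hdd : Metric.infDist x S ≤ ‖x - z₀‖ := by
        rw [← dist_eq_norm]
        exact Metric.infDist_le_dist_of_mem hz₀S
      calc τ * Metric.infDist x S ≤ τ * ‖x - z₀‖ :=
            mul_le_mul_of_nonneg_left hdd hτ.le
        _ ≤ f x := hfin
    · -- CASE B : descent at every boundary point
      push_neg at hcaseA
      have hB : ∀ z, f z = 0 → D z ≤ -τ := by
        intro z hz
        rcases hdich z hz with h | h
        · exact h
        · exact absurd h (not_le.2 (hcaseA z hz))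
      set c := f x with hc
      have hcpos : 0 < c := hfposS x hx
      set d := Metric.infDist x S with hd
      have hdpos : 0 < d := (hSclosed.notMem_iff_infDist_pos hSne).1 hx
      set Z : Set X := {z | f z = 0} with hZ
      have hZclosed : IsClosed Z := isClosed_eq hcontf continuous_const
      -- Z is nonempty : crossing on a segment from x to a point of S
      obtain ⟨xb, hxb⟩ := hSne
      have hcross : ∀ (p q : X), 0 < f p → f q ≤ 0 → ∃ l ∈ Set.Icc (0:ℝ) 1,
          f (p + l • (q - p)) = 0 := by
        intro p q hp hq
        have hgc : Continuous fun l : ℝ => f (p + l • (q - p)) :=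
          hcontf.comp (continuous_const.add (continuous_id.smul continuous_const))
        have hiv := intermediate_value_Icc' (zero_le_one (α := ℝ)) hgc.continuousOn
        have h0mem : (0:ℝ) ∈ Set.Icc (f (p + (1:ℝ) • (q - p))) (f (p + (0:ℝ) • (q - p))) := by
          constructor
          · simpa using hq
          · simpa using hp.le
        obtain ⟨l, hl, hgl⟩ := hiv h0mem
        exact ⟨l, hl, hgl⟩
      obtain ⟨l', -, hl'⟩ := hcross x xb hcpos ((hmemS xb).1 hxb)
      have hZne : (x + l' • (xb - x)) ∈ Z := hl'
      -- suppose the bound fails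
      by_contra hcc
      push_neg at hcc
      set Δ := τ * d - c with hΔ
      have hΔpos : 0 < Δ := by rw [hΔ]; linarith
      set ε := Δ / (8 * d) with hε
      have hεpos : 0 < ε := by rw [hε]; positivity
      have hετ : 2 * ε < τ := by
        have h8 : ε * (8 * d) = Δ := by rw [hε]; field_simp
        nlinarith only [h8, hΔ, hdpos, hcpos, hεpos]
      set δ := min (1/2 : ℝ) (Δ / (8 * τ * d)) with hδ
      have hδpos : 0 < δ := lt_min (by norm_num) (by positivity)
      have hδhalf : δ ≤ 1/2 := min_le_left _ _
      have hδle : δ ≤ Δ / (8 * τ * d) := min_le_right _ _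
      -- Ekeland point on Z
      obtain ⟨z₀, hz₀Z, hEk⟩ := ekeland_dist hZclosed hZne x hδpos
      have hfz₀ : f z₀ = 0 := hz₀Z
      have hDz₀ : D z₀ ≤ -τ := hB z₀ hfz₀
      -- a strict descent direction
      obtain ⟨h₀, hh₀⟩ : ∃ h : {h : X // ‖h‖ = 1},
          (⨆ t : {t : T // a t z₀ - b t = f z₀}, a t.1 h.1) < -τ + ε :=
        exists_lt_of_ciInf_lt (lt_of_le_of_lt hDz₀ (by linarith))
      have hJlt : ∀ t : {t : T // a t z₀ - b t = f z₀}, a t.1 h₀.1 < -τ + ε :=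
        fun t => lt_of_le_of_lt (le_ciSup (hbddsup z₀ h₀) t) hh₀
      -- descent step
      have hdesc : ∃ s : ℝ, 0 < s ∧ f (z₀ + s • h₀.1) ≤ (-τ + 2*ε) * s := by
        by_contra hno
        push_neg at hno
        set sn : ℕ → ℝ := fun n => 1 / (n + 1) with hsn
        have hsnpos : ∀ n, 0 < sn n := fun n => by positivity
        have htn : ∀ n : ℕ, ∃ t : T, f (z₀ + sn n • h₀.1) = a t (z₀ + sn n • h₀.1) - b t :=
          fun n => hattain _
        choose tn htn using htn
        obtain ⟨tst, -, φ, hφ, hconv⟩ :=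
          isCompact_univ.tendsto_subseq (fun n => Set.mem_univ (tn n))
        -- the value at z₀ of the active constraints tends to 0
        have hfsmall : ∀ n, |f (z₀ + sn n • h₀.1)| ≤ M * sn n := by
          intro n
          have hnorm : ‖(z₀ + sn n • h₀.1) - z₀‖ = sn n := by
            rw [add_sub_cancel_left, norm_smul, Real.norm_eq_abs, abs_of_pos (hsnpos n),
              h₀.2, mul_one]
          rw [abs_le]
          constructor
          · have := hfub z₀ (z₀ + sn n • h₀.1)
            rw [norm_sub_rev, hnorm, hfz₀] at this
            linarith
          · have := hfub (z₀ + sn n • h₀.1) z₀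
            rw [hnorm, hfz₀] at this
            linarith
        have hen_le : ∀ n, a (tn n) z₀ - b (tn n) ≤ 0 := by
          intro n
          have := hle (tn n) z₀
          rw [hfz₀] at this
          exact this
        have hval : ∀ n, a (tn n) (z₀ + sn n • h₀.1) = a (tn n) z₀ + sn n * a (tn n) h₀.1 := by
          intro n
          rw [map_add, map_smul, smul_eq_mul]
        have hen_ge : ∀ n, a (tn n) z₀ - b (tn n) ≥ -(2 * M) * sn n := by
          intro n
          have h1 := htn n
          rw [hval n] at h1
          have h2 := hfsmall n
          have h3 : |a (tn n) h₀.1| ≤ M := hbnd (tn n) h₀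
          rw [abs_le] at h2 h3
          have h5 := mul_le_mul_of_nonneg_left h3.2 (hsnpos n).le
          linarith only [h1, h2.1, h5]
        have hslope : ∀ n, (-τ + 2*ε) < a (tn n) h₀.1 := by
          intro n
          have h1 := htn n
          rw [hval n] at h1
          have h2 := hno (sn n) (hsnpos n)
          have h3 := hen_le n
          have h4 := hsnpos n
          have h5 : (-τ + 2*ε) * sn n < sn n * a (tn n) h₀.1 := by linarith only [h1, h2, h3]
          have h6 : (-τ + 2*ε) * sn n < a (tn n) h₀.1 * sn n := by
            rw [mul_comm (a (tn n) h₀.1) (sn n)]; exact h5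
          exact lt_of_mul_lt_mul_right h6 h4.le
        -- limit of active values is 0, so tst is active at z₀
        have hsnlim : Tendsto (fun n => sn (φ n)) atTop (nhds 0) :=
          tendsto_one_div_add_atTop_nhds_zero_nat.comp hφ.tendsto_atTop
        have hvlim : Tendsto (fun n => a (tn (φ n)) z₀ - b (tn (φ n))) atTop
            (nhds (a tst z₀ - b tst)) :=
          ((hcontt z₀).continuousAt.tendsto).comp hconv
        have hvzero : a tst z₀ - b tst = 0 := by
          have hub : Tendsto (fun n => (2 * M) * sn (φ n)) atTop (nhds 0) := by
            simpa using hsnlim.const_mul (2 * M)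
          have hlb : Tendsto (fun n => -(2 * M) * sn (φ n)) atTop (nhds 0) := by
            simpa using hsnlim.const_mul (-(2 * M))
          refine le_antisymm ?_ ?_
          · exact le_of_tendsto_of_tendsto hvlim hub
              (Filter.Eventually.of_forall fun n => by
                have h1 := hen_le (φ n)
                have h2 := mul_nonneg (mul_nonneg (by norm_num : (0:ℝ) ≤ 2) hM0) (hsnpos (φ n)).le
                show a (tn (φ n)) z₀ - b (tn (φ n)) ≤ 2 * M * sn (φ n)
                linarith only [h1, h2])
          · exact le_of_tendsto_of_tendsto hlb hvlim
              (Filter.Eventually.of_forall fun n => hen_ge (φ n))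
        have htval : a tst z₀ - b tst = f z₀ := by rw [hfz₀, hvzero]
        have hltst := hJlt ⟨tst, htval⟩
        have hhlim : Tendsto (fun n => a (tn (φ n)) h₀.1) atTop (nhds (a tst h₀.1)) :=
          (((ha.clm_apply (continuous_const : Continuous fun _ : T => h₀.1)).continuousAt).tendsto).comp hconv
        have hge : (-τ + 2*ε) ≤ a tst h₀.1 :=
          ge_of_tendsto hhlim (Filter.Eventually.of_forall fun n => (hslope (φ n)).le)
        have hltst' : a tst h₀.1 < -τ + ε := hltst
        linarith
      obtain ⟨s, hspos, hfw⟩ := hdesc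
      set w : X := z₀ + s • h₀.1 with hw
      have hfwneg : f w < 0 := lt_of_le_of_lt hfw
        (by nlinarith only [hετ, hspos])
      have hwz₀ : ‖w - z₀‖ = s := by
        rw [hw, add_sub_cancel_left, norm_smul, Real.norm_eq_abs, abs_of_pos hspos, h₀.2, mul_one]
      have hwS : w ∈ S := (hmemS w).2 hfwneg.le
      -- crossing point on [x, w]
      obtain ⟨lam, hlam, hflam⟩ := hcross x w hcpos hfwneg.le
      set z₁ : X := x + lam • (w - x) with hz₁
      have hz₁Z : z₁ ∈ Z := hflam
      have hfz₁ : f z₁ = 0 := hflam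
      -- convexity of f along the segment
      have hconvf : f z₁ ≤ (1 - lam) * f x + lam * f w := by
        rw [hfx z₁]
        refine ciSup_le fun t => ?_
        have hlin : a t z₁ - b t = (1 - lam) * (a t x - b t) + lam * (a t w - b t) := by
          rw [hz₁, map_add, map_smul, map_sub, smul_eq_mul]
          ring
        rw [hlin]
        have h1 := mul_le_mul_of_nonneg_left (hle t x) (by linarith [hlam.2] : (0:ℝ) ≤ 1 - lam)
        have h2 := mul_le_mul_of_nonneg_left (hle t w) hlam.1
        linarith
      -- distances
      set q : ℝ := ‖x - z₁‖ with hqdef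
      set ρ : ℝ := ‖z₁ - w‖ with hρdef
      have hxw : x - z₁ = lam • (x - w) := by
        rw [hz₁]
        module
      have hz₁w : z₁ - w = (1 - lam) • (x - w) := by
        rw [hz₁]
        module
      have hq_eq : q = lam * ‖x - w‖ := by
        rw [hqdef, hxw, norm_smul, Real.norm_eq_abs, abs_of_nonneg hlam.1]
      have hρ_eq : ρ = (1 - lam) * ‖x - w‖ := by
        rw [hρdef, hz₁w, norm_smul, Real.norm_eq_abs, abs_of_nonneg (by linarith [hlam.2])]
      have hsum_qρ : q + ρ = ‖x - w‖ := by rw [hq_eq, hρ_eq]; ring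
      have hρpos : 0 < ρ := by
        rw [hρdef]
        refine norm_pos_iff.2 (sub_ne_zero.2 fun h => ?_)
        rw [h] at hfz₁
        rw [hfz₁] at hfwneg
        exact lt_irrefl 0 hfwneg
      have hqd : d ≤ q := by
        rw [hqdef, ← dist_eq_norm]
        exact Metric.infDist_le_dist_of_mem ((hmemS z₁).2 hfz₁.le)
      -- slope inequality : ρ * c ≥ q * (τ - 2ε) * s
      have hslope2 : q * ((τ - 2*ε) * s) ≤ ρ * c := by
        have h0 : 0 = f z₁ := hfz₁.symm
        have h1 : lam * (- f w) ≤ (1 - lam) * c := by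
          have := hconvf
          rw [hfz₁] at this
          linarith
        have h2 : (τ - 2*ε) * s ≤ - f w := by linarith
        have h3 : 0 ≤ ‖x - w‖ := norm_nonneg _
        have h4 := mul_le_mul_of_nonneg_right h1 h3
        -- q * (−fw) ≤ ρ * c
        have h5 : q * (- f w) ≤ ρ * c := by
          rw [hq_eq, hρ_eq]
          nlinarith only [h4]
        have h6 : (0:ℝ) ≤ q := hq_eq ▸ mul_nonneg hlam.1 (norm_nonneg _)
        nlinarith only [h5, h2, h6]
      -- Ekeland inequality at z₁
      have hEk1 : ‖x - z₀‖ ≤ q + δ * ‖z₁ - z₀‖ := hEk z₁ hz₁Z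
      have htr1 : ‖x - w‖ ≤ ‖x - z₀‖ + s := by
        calc ‖x - w‖ ≤ ‖x - z₀‖ + ‖z₀ - w‖ := norm_sub_le_norm_sub_add_norm_sub _ _ _
          _ = ‖x - z₀‖ + s := by rw [norm_sub_rev z₀ w, hwz₀]
      have htr2 : ‖z₁ - z₀‖ ≤ ρ + s := by
        calc ‖z₁ - z₀‖ ≤ ‖z₁ - w‖ + ‖w - z₀‖ := norm_sub_le_norm_sub_add_norm_sub _ _ _
          _ = ρ + s := by rw [hwz₀]
      have hρbound : ρ * (1 - δ) ≤ (1 + δ) * s := by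
        have h1 : q + ρ ≤ q + δ * (ρ + s) + s := by
          have h2 := mul_le_mul_of_nonneg_left htr2 hδpos.le
          linarith only [hsum_qρ ▸ htr1, hEk1, h2]
        nlinarith only [h1]
      -- final contradiction
      have hδ1 : δ < 1 := lt_of_le_of_lt hδhalf (by norm_num)
      have hcle : c ≤ τ * d := by linarith
      have hεle : ε * (8 * d) = Δ := by
        rw [hε]; field_simp
      have hδle2 : δ * (8 * τ * d) ≤ Δ := by
        have h8 : 0 < 8 * τ * d := by positivity
        calc δ * (8 * τ * d) ≤ (Δ / (8 * τ * d)) * (8 * τ * d) :=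
              mul_le_mul_of_nonneg_right hδle h8.le
          _ = Δ := by field_simp
      -- d (τ − 2ε)(1−δ) ≤ (1+δ) c
      have hδ5 : (0:ℝ) < 1 - δ := by linarith only [hδ1]
      have hmain : d * ((τ - 2*ε) * (1 - δ)) ≤ (1 + δ) * c := by
        have hpos0 : (0:ℝ) ≤ (τ - 2*ε) * s :=
          mul_nonneg (by linarith only [hετ]) hspos.le
        have h1 : d * ((τ - 2*ε) * s) ≤ q * ((τ - 2*ε) * s) :=
          mul_le_mul_of_nonneg_right hqd hpos0
        have h2 : d * ((τ - 2*ε) * s) ≤ ρ * c := le_trans h1 hslope2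
        have h3 : ρ * (1 - δ) * c ≤ (1 + δ) * s * c :=
          mul_le_mul_of_nonneg_right hρbound hcpos.le
        have h4 : d * ((τ - 2*ε) * s) * (1 - δ) ≤ ρ * c * (1 - δ) :=
          mul_le_mul_of_nonneg_right h2 hδ5.le
        have h6 : d * ((τ - 2*ε) * (1 - δ)) * s ≤ (1 + δ) * c * s := by
          nlinarith only [h3, h4]
        exact le_of_mul_le_mul_right (by linarith only [h6]) hspos
      have p1 : (0:ℝ) ≤ ε * δ * d :=
        mul_nonneg (mul_nonneg hεpos.le hδpos.le) hdpos.le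
      have p2 : δ * c ≤ δ * (τ * d) := mul_le_mul_of_nonneg_left hcle hδpos.le
      have p3 : δ * (8 * τ * d) ≤ Δ := hδle2
      linarith only [hmain, hεle, p3, hΔ, p1, p2, hΔpos]
  -- conclude in EReal
  refine le_iInf ?_
  rintro ⟨x, hx⟩
  have hfpos : 0 < f x := hfposS x hx
  have hdpos : 0 < Metric.infDist x S := (hSclosed.notMem_iff_infDist_pos hSne).1 hx
  rw [← EReal.coe_div, EReal.coe_le_coe_iff, le_div_iff₀ hdpos]
  have := key x hx
  linarith
end
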